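/- arXiv:2211.03571 — 9 statements merged into one kernel-verified Lean document; each statement's English description precedes it below -/
import Mathlib

section
/- Let n ≥ 0 and let F be the free group on the n+2 generators α, β, γ₁, …, γₙ. The subgroup of F generated by the set {α², β², αβ} ∪ {γᵢ : 1 ≤ i ≤ n} ∪ {αγᵢα⁻¹ : 1 ≤ i ≤ n} equals the kernel of the group homomorphism χ : F → ℤ/2ℤ determined by χ(α) = χ(β) = 1 and χ(γᵢ) = 0 for all i. Equivalently, an element with abelianized image m[α] + n'[β] + k₁[γ₁] + … + kₙ[γₙ] lies in this subgroup if and only if m + n' ≡ 0 (mod 2). -/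
/-- In the free group on `α, β, γ₁, …, γₙ`, the subgroup generated by
`{α², β², αβ} ∪ {γᵢ} ∪ {αγᵢα⁻¹}` equals the kernel of the homomorphism
`χ : F → ℤ/2ℤ` with `χ(α) = χ(β) = 1` and `χ(γᵢ) = 0`. -/
theorem stmt_1 (n : ℕ) :
    let α : FreeGroup (Fin 2 ⊕ Fin n) := FreeGroup.of (Sum.inl 0)
    let β : FreeGroup (Fin 2 ⊕ Fin n) := FreeGroup.of (Sum.inl 1)
    let γ : Fin n → FreeGroup (Fin 2 ⊕ Fin n) := fun i => FreeGroup.of (Sum.inr i)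
    Subgroup.closure
        (({α ^ 2, β ^ 2, α * β} : Set (FreeGroup (Fin 2 ⊕ Fin n))) ∪
          Set.range γ ∪ Set.range (fun i => α * γ i * α⁻¹)) =
      (FreeGroup.lift
        (Sum.elim (fun _ : Fin 2 => Multiplicative.ofAdd (1 : ZMod 2))
          (fun _ : Fin n => Multiplicative.ofAdd (0 : ZMod 2)))).ker := by
  show Subgroup.closure
        (({FreeGroup.of (Sum.inl 0) ^ 2, FreeGroup.of (Sum.inl 1) ^ 2,
            FreeGroup.of (Sum.inl 0) * FreeGroup.of (Sum.inl 1)} :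
              Set (FreeGroup (Fin 2 ⊕ Fin n))) ∪
          Set.range (fun i : Fin n => FreeGroup.of (Sum.inr i)) ∪
          Set.range (fun i : Fin n =>
            FreeGroup.of (Sum.inl 0) * FreeGroup.of (Sum.inr i) * (FreeGroup.of (Sum.inl 0))⁻¹)) =
      (FreeGroup.lift
        (Sum.elim (fun _ : Fin 2 => Multiplicative.ofAdd (1 : ZMod 2))
          (fun _ : Fin n => Multiplicative.ofAdd (0 : ZMod 2)))).ker
  set G := FreeGroup (Fin 2 ⊕ Fin n) with hG
  set α : G := FreeGroup.of (Sum.inl 0) with hαdef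
  set β : G := FreeGroup.of (Sum.inl 1) with hβdef
  set γ : Fin n → G := fun i => FreeGroup.of (Sum.inr i) with hγdef
  set S : Set G := ({α ^ 2, β ^ 2, α * β} : Set G) ∪ Set.range γ ∪
      Set.range (fun i => α * γ i * α⁻¹) with hS
  set H := Subgroup.closure S with hH
  set χ := FreeGroup.lift
      (Sum.elim (fun _ : Fin 2 => Multiplicative.ofAdd (1 : ZMod 2))
        (fun _ : Fin n => Multiplicative.ofAdd (0 : ZMod 2))) with hχ
  have hSmem : ∀ s, s ∈ S ↔ (s = α ^ 2 ∨ s = β ^ 2 ∨ s = α * β) ∨ (∃ i, γ i = s) ∨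
      (∃ i, α * γ i * α⁻¹ = s) := by
    intro s
    simp [hS, Set.mem_union, Set.mem_insert_iff, Set.mem_range, or_assoc]
  have hα2 : α ^ 2 ∈ H := Subgroup.subset_closure ((hSmem _).mpr (Or.inl (Or.inl rfl)))
  have hβ2 : β ^ 2 ∈ H := Subgroup.subset_closure ((hSmem _).mpr (Or.inl (Or.inr (Or.inl rfl))))
  have hαβ : α * β ∈ H := Subgroup.subset_closure ((hSmem _).mpr (Or.inl (Or.inr (Or.inr rfl))))
  have hγ : ∀ i, γ i ∈ H := fun i =>
    Subgroup.subset_closure ((hSmem _).mpr (Or.inr (Or.inl ⟨i, rfl⟩)))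
  have hγ' : ∀ i, α * γ i * α⁻¹ ∈ H := fun i =>
    Subgroup.subset_closure ((hSmem _).mpr (Or.inr (Or.inr ⟨i, rfl⟩)))
  have key : ∀ g : G, (∀ s ∈ S, g * s * g⁻¹ ∈ H) → ∀ h ∈ H, g * h * g⁻¹ ∈ H := by
    intro g hg h hh
    have h2 : H.map (MulAut.conj g).toMonoidHom ≤ H := by
      rw [hH, MonoidHom.map_closure, Subgroup.closure_le]
      rintro _ ⟨s, hs, rfl⟩
      simpa using hg s hs
    exact h2 ⟨h, hh, by simp⟩
  have hconjα : ∀ h ∈ H, α * h * α⁻¹ ∈ H := by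
    refine key α ?_
    intro s hs
    rcases (hSmem s).mp hs with (rfl | rfl | rfl) | ⟨i, rfl⟩ | ⟨i, rfl⟩
    · have e : α * α ^ 2 * α⁻¹ = α ^ 2 := by group
      rw [e]; exact hα2
    · have e : α * β ^ 2 * α⁻¹ = (α * β) * β ^ 2 * (α * β)⁻¹ := by group
      rw [e]; exact mul_mem (mul_mem hαβ hβ2) (inv_mem hαβ)
    · have e : α * (α * β) * α⁻¹ = α ^ 2 * β ^ 2 * (α * β)⁻¹ := by
        rw [pow_two, pow_two]; group
      rw [e]; exact mul_mem (mul_mem hα2 hβ2) (inv_mem hαβ)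
    · exact hγ' i
    · have e : α * (α * γ i * α⁻¹) * α⁻¹ = α ^ 2 * (γ i) * (α ^ 2)⁻¹ := by
        rw [pow_two]; unfold G at *; group
      rw [e]; exact mul_mem (mul_mem hα2 (hγ i)) (inv_mem hα2)
  have hstep : ∀ s ∈ S, α⁻¹ * s * α⁻¹⁻¹ ∈ H := by
    intro s hs
    rcases (hSmem s).mp hs with (rfl | rfl | rfl) | ⟨i, rfl⟩ | ⟨i, rfl⟩
    · have e : α⁻¹ * α ^ 2 * α⁻¹⁻¹ = α ^ 2 := by unfold G at *; group
      rw [e]; exact hα2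
    · have e : α⁻¹ * β ^ 2 * α⁻¹⁻¹ = (α ^ 2)⁻¹ * ((α * β) * β ^ 2 * (α * β)⁻¹) * α ^ 2 := by
        rw [pow_two]; unfold G at *; group
      rw [e]
      exact mul_mem (mul_mem (inv_mem hα2) (mul_mem (mul_mem hαβ hβ2) (inv_mem hαβ))) hα2
    · have e : α⁻¹ * (α * β) * α⁻¹⁻¹ = β ^ 2 * (α * β)⁻¹ * α ^ 2 := by
        rw [pow_two, pow_two]; unfold G at *; group
      rw [e]; exact mul_mem (mul_mem hβ2 (inv_mem hαβ)) hα2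
    · have e : α⁻¹ * γ i * α⁻¹⁻¹ = (α ^ 2)⁻¹ * (α * γ i * α⁻¹) * α ^ 2 := by
        rw [pow_two]; unfold G at *; group
      rw [e]; exact mul_mem (mul_mem (inv_mem hα2) (hγ' i)) hα2
    · have e : α⁻¹ * (α * γ i * α⁻¹) * α⁻¹⁻¹ = γ i := by unfold G at *; group
      rw [e]; exact hγ i
  have hconjα' : ∀ h ∈ H, α⁻¹ * h * α ∈ H := by
    intro h hh
    have h2 := key α⁻¹ hstep h hh
    unfold G at *; simpa using h2
  have hαN : α ∈ Subgroup.normalizer (H : Set G) := by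
    rw [Subgroup.mem_normalizer_iff]
    intro h
    constructor
    · exact hconjα h
    · intro hh
      have h2 := hconjα' _ hh
      have e : α⁻¹ * (α * h * α⁻¹) * α = h := by unfold G at *; group
      rwa [e] at h2
  have hNtop : Subgroup.normalizer (H : Set G) = ⊤ := by
    rw [eq_top_iff, ← FreeGroup.closure_range_of, Subgroup.closure_le]
    rintro _ ⟨x, rfl⟩
    simp only [SetLike.mem_coe]
    cases x with
    | inl j =>
      fin_cases j
      · exact hαN
      · have hβN : α⁻¹ * (α * β) ∈ Subgroup.normalizer (H : Set G) :=
          mul_mem (inv_mem hαN) (Subgroup.le_normalizer hαβ)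
        unfold G at *; simpa using hβN
    | inr i => exact Subgroup.le_normalizer (hγ i)
  haveI hNorm : H.Normal := Subgroup.normalizer_eq_top_iff.mp hNtop
  -- values of χ on the generators
  have hχα : χ α = Multiplicative.ofAdd (1 : ZMod 2) := FreeGroup.lift_apply_of
  have hχβ : χ β = Multiplicative.ofAdd (1 : ZMod 2) := FreeGroup.lift_apply_of
  have hχγ : ∀ i, χ (γ i) = Multiplicative.ofAdd (0 : ZMod 2) := fun _ => FreeGroup.lift_apply_of
  -- closure ≤ ker
  have hle : H ≤ χ.ker := by
    rw [hH, Subgroup.closure_le]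
    intro s hs
    simp only [SetLike.mem_coe, MonoidHom.mem_ker]
    rcases (hSmem s).mp hs with (rfl | rfl | rfl) | ⟨i, rfl⟩ | ⟨i, rfl⟩
    · rw [map_pow, hχα]; decide
    · rw [map_pow, hχβ]; decide
    · rw [map_mul, hχα, hχβ]; decide
    · rw [hχγ]; decide
    · rw [map_mul, map_mul, map_inv, hχα, hχγ]; decide
  -- coset decomposition
  have hmemH : ∀ x : G, ((x : G ⧸ H) = 1) ↔ x ∈ H := fun x => QuotientGroup.eq_one_iff x
  have hqα2 : (α : G ⧸ H) * (α : G ⧸ H) = 1 := by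
    rw [← QuotientGroup.mk_mul, ← pow_two]
    exact (hmemH _).mpr hα2
  have hcos : ∀ x : G, (x : G ⧸ H) = 1 ∨ (x : G ⧸ H) = (α : G ⧸ H) := by
    intro x
    have hx : x ∈ Subgroup.closure (Set.range (FreeGroup.of : (Fin 2 ⊕ Fin n) → G)) := by
      rw [FreeGroup.closure_range_of]; trivial
    refine Subgroup.closure_induction ?_ (Or.inl rfl) ?_ ?_ hx
    · rintro _ ⟨y, rfl⟩
      cases y with
      | inl j =>
        fin_cases j
        · exact Or.inr rfl
        · right
          have h1 : (α : G ⧸ H) * (β : G ⧸ H) = 1 := by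
            rw [← QuotientGroup.mk_mul]
            exact (hmemH _).mpr hαβ
          show (β : G ⧸ H) = (α : G ⧸ H)
          calc (β : G ⧸ H) = (α : G ⧸ H) * ((α : G ⧸ H) * (β : G ⧸ H)) := by
                rw [← mul_assoc, hqα2, one_mul]
          _ = (α : G ⧸ H) := by rw [h1, mul_one]
      | inr i => exact Or.inl ((hmemH _).mpr (hγ i))
    · rintro x y _ _ (h1 | h1) (h2 | h2) <;>
        rw [QuotientGroup.mk_mul, h1, h2] <;> simp [hqα2]
    · rintro x _ (h1 | h1)
      · rw [QuotientGroup.mk_inv, h1, inv_one]; exact Or.inl rfl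
      · right
        rw [QuotientGroup.mk_inv, h1]
        exact inv_eq_of_mul_eq_one_left hqα2
  -- ker ≤ closure
  refine le_antisymm hle ?_
  intro x hx
  rcases hcos x with h1 | h2
  · exact (hmemH x).mp h1
  · exfalso
    have hmem : x * α⁻¹ ∈ H := by
      apply (hmemH (x * α⁻¹)).mp
      rw [QuotientGroup.mk_mul, QuotientGroup.mk_inv, h2, mul_inv_cancel]
    have hker := hle hmem
    rw [MonoidHom.mem_ker] at hx hker
    rw [map_mul, map_inv, hx, one_mul, hχα] at hker
    exact absurd hker (by decide)
end

section
/- In the free group F on two generators a, b, the subgroup generated by {a⁴, b⁴, (ab)², a²ba, a²b²} equals the kernel of the group homomorphism χ : F → ℤ/4ℤ determined by χ(a) = 1 and χ(b) = 1. Equivalently, an element with abelianized image m[a] + n[b] lies in this subgroup if and only if m + n ≡ 0 (mod 4). -/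
/-!
Choose the transversal `q ↦ a ^ q.val` of `ker χ` and let `H` be the subgroup generated by the
five words. Right multiplication by `a` or `b` permutes the four right cosets `H aᵏ` cyclically
(for `b` this amounts to `aᵏ b a⁻⁽ᵏ⁺¹⁾ ∈ H`, an explicit product of the generators), so every
`g` lies in `H a^(χ g)`, and hence in `H` when `χ g = 0`. Conversely each of the five words has
total exponent divisible by `4`.
-/

section Transversal

variable {G Q : Type*} [Group G] [Group Q]

/-- `hstep` says that right multiplication by a generator `s` maps the coset `H t(q)` into
`H t(q χ(s))`. -/
theorem mul_inv_mem_of_transversal {H : Subgroup G} {S : Set G}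
    (hS : Subgroup.closure S = ⊤) (χ : G →* Q) (t : Q → G) (ht : t 1 = 1)
    (hstep : ∀ s ∈ S, ∀ q, t q * s * (t (q * χ s))⁻¹ ∈ H) (g : G) :
    g * (t (χ g))⁻¹ ∈ H := by
  have hg : g ∈ Subgroup.closure S := hS ▸ Subgroup.mem_top g
  induction hg using Subgroup.closure_induction_right with
  | one => simp [ht]
  | mul_right x _ s hs ih =>
    convert H.mul_mem ih (hstep s hs (χ x)) using 1
    rw [map_mul]
    group
  | mul_inv_cancel x _ s hs ih =>
    convert H.mul_mem ih (H.inv_mem (hstep s hs (χ x * (χ s)⁻¹))) using 1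
    rw [map_mul, map_inv, inv_mul_cancel_right]
    group

theorem ker_le_of_transversal {H : Subgroup G} {S : Set G}
    (hS : Subgroup.closure S = ⊤) (χ : G →* Q) (t : Q → G) (ht : t 1 = 1)
    (hstep : ∀ s ∈ S, ∀ q, t q * s * (t (q * χ s))⁻¹ ∈ H) : χ.ker ≤ H := fun g hg => by
  simpa [MonoidHom.mem_ker.mp hg, ht] using mul_inv_mem_of_transversal hS χ t ht hstep g

end Transversal

theorem ZMod.val_add_one_eq_mod {n : ℕ} [NeZero n] (k : ZMod n) :
    (k + 1).val = (k.val + 1) % n := by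
  rw [ZMod.val_add, ZMod.val_one_eq_one_mod, Nat.add_mod_mod]

section Generators

variable {G : Type*} [Group G] {H : Subgroup G} {a b : G}

theorem pow_mul_self_mul_inv_pow_succ_mod_mem {n : ℕ} (ha : a ^ n ∈ H) (j : ℕ) :
    a ^ j * a * (a ^ ((j + 1) % n))⁻¹ ∈ H := by
  rw [← pow_succ]
  nth_rw 1 [← Nat.div_add_mod (j + 1) n]
  rw [pow_add, pow_mul, mul_inv_cancel_right]
  exact pow_mem ha _

theorem pow_mul_mul_inv_pow_succ_mod_four_mem (ha4 : a ^ 4 ∈ H) (hb4 : b ^ 4 ∈ H)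
    (hab2 : (a * b) ^ 2 ∈ H) (haba : a ^ 2 * b * a ∈ H) (ha2b2 : a ^ 2 * b ^ 2 ∈ H)
    {j : ℕ} (hj : j < 4) : a ^ j * b * (a ^ ((j + 1) % 4))⁻¹ ∈ H := by
  interval_cases j <;>
    simp only [Nat.reduceAdd, Nat.reduceMod, pow_zero, pow_one, inv_one, one_mul, mul_one]
  · rw [show b * a⁻¹ = b ^ 4 * (a ^ 2 * b ^ 2)⁻¹ * a ^ 4 * (a ^ 2 * b * a)⁻¹ *
        (a ^ 2 * b ^ 2) * ((a * b) ^ 2)⁻¹ by rw [sq (a * b)]; group]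
    apply_rules [mul_mem, inv_mem]
  · rw [show a * b * (a ^ 2)⁻¹ =
        (a * b) ^ 2 * (a ^ 2 * b ^ 2)⁻¹ * (a ^ 2 * b * a) * (a ^ 4)⁻¹ by rw [sq (a * b)]; group]
    apply_rules [mul_mem, inv_mem]
  · rw [show a ^ 2 * b * (a ^ 3)⁻¹ = a ^ 2 * b * a * (a ^ 4)⁻¹ by group]
    apply_rules [mul_mem, inv_mem]
  · rw [show a ^ 3 * b = a ^ 4 * (a ^ 2 * b * a)⁻¹ * (a ^ 2 * b ^ 2) by group]
    apply_rules [mul_mem, inv_mem]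

theorem ker_le_closure_244 (hab : Subgroup.closure {a, b} = ⊤)
    (χ : G →* Multiplicative (ZMod 4)) (hχa : χ a = .ofAdd 1) (hχb : χ b = .ofAdd 1) :
    χ.ker ≤ Subgroup.closure {a ^ 4, b ^ 4, (a * b) ^ 2, a ^ 2 * b * a, a ^ 2 * b ^ 2} := by
  have gen {x : G}
      (hx : x ∈ ({a ^ 4, b ^ 4, (a * b) ^ 2, a ^ 2 * b * a, a ^ 2 * b ^ 2} : Set G)) :
      x ∈ Subgroup.closure {a ^ 4, b ^ 4, (a * b) ^ 2, a ^ 2 * b * a, a ^ 2 * b ^ 2} :=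
    Subgroup.subset_closure hx
  refine ker_le_of_transversal hab χ (fun q => a ^ (Multiplicative.toAdd q).val) (by simp) ?_
  rintro s (rfl | rfl) q
  · simp only [hχa, toAdd_mul, toAdd_ofAdd, ZMod.val_add_one_eq_mod]
    exact pow_mul_self_mul_inv_pow_succ_mod_mem (gen (by simp)) _
  · simp only [hχb, toAdd_mul, toAdd_ofAdd, ZMod.val_add_one_eq_mod]
    exact pow_mul_mul_inv_pow_succ_mod_four_mem (gen (by simp)) (gen (by simp))
      (gen (by simp)) (gen (by simp)) (gen (by simp)) (ZMod.val_lt _)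

end Generators

/-- In the free group on two generators `a, b`, the subgroup generated by
`{a⁴, b⁴, (ab)², a²ba, a²b²}` equals the kernel of the homomorphism
`χ : F → ℤ/4ℤ` with `χ(a) = χ(b) = 1`. -/
theorem stmt_4 :
    let a : FreeGroup (Fin 2) := FreeGroup.of 0
    let b : FreeGroup (Fin 2) := FreeGroup.of 1
    Subgroup.closure
        ({a ^ 4, b ^ 4, (a * b) ^ 2, a ^ 2 * b * a,
          a ^ 2 * b ^ 2} : Set (FreeGroup (Fin 2))) =
      (FreeGroup.lift
        (fun _ : Fin 2 => Multiplicative.ofAdd (1 : ZMod 4))).ker := by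
  intro a b
  have hab : Subgroup.closure {a, b} = ⊤ := by
    rw [← FreeGroup.closure_range_of]
    congr
    ext
    simp [Fin.exists_fin_two, eq_comm, a, b]
  refine le_antisymm ?_ (ker_le_closure_244 hab _ FreeGroup.lift_apply_of FreeGroup.lift_apply_of)
  rw [Subgroup.closure_le]
  rintro x (rfl | rfl | rfl | rfl | rfl) <;> simp [a, b] <;> decide
end

section
/- Let n ≥ 0 and let F be the free group on the n+2 generators α, β, γ₁, …, γₙ. The subgroup of F generated by the set {α⁴, β⁴, (αβ)², α²βα, α²β²} ∪ {αᵏγᵢα⁻ᵏ : 1 ≤ i ≤ n, k = 0, 1, 2, 3} equals the kernel of the group homomorphism χ : F → ℤ/4ℤ determined by χ(α) = χ(β) = 1 and χ(γᵢ) = 0 for all i. Equivalently, an element with abelianized image m[α] + n'[β] + k₁[γ₁] + … + kₙ[γₙ] lies in this subgroup if and only if m + n' ≡ 0 (mod 4). -/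
/-- In the free group on `α, β, γ₁, …, γₙ`, the subgroup generated by
`{α⁴, β⁴, (αβ)², α²βα, α²β²} ∪ {αᵏγᵢα⁻ᵏ : k = 0,1,2,3}` equals the kernel of
the homomorphism `χ : F → ℤ/4ℤ` with `χ(α) = χ(β) = 1` and `χ(γᵢ) = 0`. -/
theorem stmt_5 (n : ℕ) :
    let α : FreeGroup (Fin 2 ⊕ Fin n) := FreeGroup.of (Sum.inl 0)
    let β : FreeGroup (Fin 2 ⊕ Fin n) := FreeGroup.of (Sum.inl 1)
    let γ : Fin n → FreeGroup (Fin 2 ⊕ Fin n) := fun i => FreeGroup.of (Sum.inr i)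
    Subgroup.closure
        (({α ^ 4, β ^ 4, (α * β) ^ 2, α ^ 2 * β * α,
            α ^ 2 * β ^ 2} : Set (FreeGroup (Fin 2 ⊕ Fin n))) ∪
          Set.range (fun p : Fin n × Fin 4 =>
            α ^ (p.2 : ℕ) * γ p.1 * (α ^ (p.2 : ℕ))⁻¹)) =
      (FreeGroup.lift
        (Sum.elim (fun _ : Fin 2 => Multiplicative.ofAdd (1 : ZMod 4))
          (fun _ : Fin n => Multiplicative.ofAdd (0 : ZMod 4)))).ker := by
  intro α β γ
  set χ := FreeGroup.lift
        (Sum.elim (fun _ : Fin 2 => Multiplicative.ofAdd (1 : ZMod 4))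
          (fun _ : Fin n => Multiplicative.ofAdd (0 : ZMod 4))) with hχ
  set S : Set (FreeGroup (Fin 2 ⊕ Fin n)) :=
      ({α ^ 4, β ^ 4, (α * β) ^ 2, α ^ 2 * β * α, α ^ 2 * β ^ 2} :
          Set (FreeGroup (Fin 2 ⊕ Fin n))) ∪
        Set.range (fun p : Fin n × Fin 4 =>
          α ^ (p.2 : ℕ) * γ p.1 * (α ^ (p.2 : ℕ))⁻¹) with hSdef
  set H := Subgroup.closure S with hH
  have hkcases : ∀ k : ZMod 4, k = 0 ∨ k = 1 ∨ k = 2 ∨ k = 3 := by decide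
  have hv0 : (0 : ZMod 4).val = 0 := by decide
  have hv1 : (1 : ZMod 4).val = 1 := by decide
  have hv2 : (2 : ZMod 4).val = 2 := by decide
  have hv3 : (3 : ZMod 4).val = 3 := by decide
  have hA : α ^ 4 ∈ H := Subgroup.subset_closure (by left; simp)
  have hβ4 : β ^ 4 ∈ H := Subgroup.subset_closure (by left; simp)
  have hαβ2 : (α * β) ^ 2 ∈ H := Subgroup.subset_closure (by left; simp)
  have h2βα : α ^ 2 * β * α ∈ H := Subgroup.subset_closure (by left; simp)
  have h2β2 : α ^ 2 * β ^ 2 ∈ H := Subgroup.subset_closure (by left; simp)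
  have hb2 : α ^ 2 * β * (α ^ 3)⁻¹ ∈ H := by
    have e : α ^ 2 * β * (α ^ 3)⁻¹ = (α ^ 2 * β * α) * (α ^ 4)⁻¹ := by group
    rw [e]; exact mul_mem h2βα (inv_mem hA)
  have hb3 : α ^ 3 * β ∈ H := by
    have e : α ^ 3 * β = (α ^ 2 * β * (α ^ 3)⁻¹)⁻¹ * (α ^ 2 * β ^ 2) := by group
    rw [e]; exact mul_mem (inv_mem hb2) h2β2
  have hb1 : α * β * (α ^ 2)⁻¹ ∈ H := by
    have e : α * β * (α ^ 2)⁻¹ = (α * β) ^ 2 * (α ^ 3 * β)⁻¹ := by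
      rw [pow_two (α * β)]; group
    rw [e]; exact mul_mem hαβ2 (inv_mem hb3)
  have hb0 : β * α⁻¹ ∈ H := by
    have e : β * α⁻¹ = β ^ 4 * (α ^ 3 * β)⁻¹ * (α ^ 2 * β * (α ^ 3)⁻¹)⁻¹ *
        (α * β * (α ^ 2)⁻¹)⁻¹ := by group
    rw [e]
    exact mul_mem (mul_mem (mul_mem hβ4 (inv_mem hb3)) (inv_mem hb2)) (inv_mem hb1)
  have hχα : χ (FreeGroup.of (Sum.inl (0 : Fin 2)) : FreeGroup (Fin 2 ⊕ Fin n)) =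
      Multiplicative.ofAdd (1 : ZMod 4) := FreeGroup.lift_apply_of
  have hχβ : χ (FreeGroup.of (Sum.inl (1 : Fin 2)) : FreeGroup (Fin 2 ⊕ Fin n)) =
      Multiplicative.ofAdd (1 : ZMod 4) := FreeGroup.lift_apply_of
  have hχγ : ∀ i : Fin n, χ (FreeGroup.of (Sum.inr i) : FreeGroup (Fin 2 ⊕ Fin n)) =
      Multiplicative.ofAdd (0 : ZMod 4) := fun i => FreeGroup.lift_apply_of
  have key : ∀ g : FreeGroup (Fin 2 ⊕ Fin n), ∀ k : ZMod 4,
      α ^ k.val * g * (α ^ (k + Multiplicative.toAdd (χ g)).val)⁻¹ ∈ H := by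
    intro g
    induction g using FreeGroup.induction_on with
    | C1 =>
      intro k
      simp only [map_one, toAdd_one, add_zero, mul_one]
      simpa using one_mem H
    | of x =>
      intro k
      rcases x with j | i
      · have hj : j = 0 ∨ j = 1 := by omega
        rcases hj with rfl | rfl
        · -- generator α
          have hpure : (pure (Sum.inl (0 : Fin 2)) : FreeGroup (Fin 2 ⊕ Fin n)) =
              FreeGroup.of (Sum.inl 0) := rfl
          rw [hχα, toAdd_ofAdd]
          rcases hkcases k with rfl | rfl | rfl | rfl
          · rw [show ((0 : ZMod 4) + 1) = 1 from by decide, hv0, hv1]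
            have e : α ^ 0 * FreeGroup.of (Sum.inl (0 : Fin 2)) * (α ^ 1)⁻¹ = 1 := by
              show α ^ 0 * α * (α ^ 1)⁻¹ = 1; group
            rw [e]; exact one_mem H
          · rw [show ((1 : ZMod 4) + 1) = 2 from by decide, hv1, hv2]
            have e : α ^ 1 * FreeGroup.of (Sum.inl (0 : Fin 2)) * (α ^ 2)⁻¹ = 1 := by
              show α ^ 1 * α * (α ^ 2)⁻¹ = 1; group
            rw [e]; exact one_mem H
          · rw [show ((2 : ZMod 4) + 1) = 3 from by decide, hv2, hv3]
            have e : α ^ 2 * FreeGroup.of (Sum.inl (0 : Fin 2)) * (α ^ 3)⁻¹ = 1 := by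
              show α ^ 2 * α * (α ^ 3)⁻¹ = 1; group
            rw [e]; exact one_mem H
          · rw [show ((3 : ZMod 4) + 1) = 0 from by decide, hv3, hv0]
            have e : α ^ 3 * FreeGroup.of (Sum.inl (0 : Fin 2)) * (α ^ 0)⁻¹ = α ^ 4 := by
              show α ^ 3 * α * (α ^ 0)⁻¹ = α ^ 4; group
            rw [e]; exact hA
        · -- generator β
          have hpure : (pure (Sum.inl (1 : Fin 2)) : FreeGroup (Fin 2 ⊕ Fin n)) =
              FreeGroup.of (Sum.inl 1) := rfl
          rw [hχβ, toAdd_ofAdd]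
          rcases hkcases k with rfl | rfl | rfl | rfl
          · rw [show ((0 : ZMod 4) + 1) = 1 from by decide, hv0, hv1]
            have e : α ^ 0 * FreeGroup.of (Sum.inl (1 : Fin 2)) * (α ^ 1)⁻¹ = β * α⁻¹ := by
              show α ^ 0 * β * (α ^ 1)⁻¹ = β * α⁻¹; group
            rw [e]; exact hb0
          · rw [show ((1 : ZMod 4) + 1) = 2 from by decide, hv1, hv2]
            have e : α ^ 1 * FreeGroup.of (Sum.inl (1 : Fin 2)) * (α ^ 2)⁻¹ =
                α * β * (α ^ 2)⁻¹ := by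
              show α ^ 1 * β * (α ^ 2)⁻¹ = α * β * (α ^ 2)⁻¹; group
            rw [e]; exact hb1
          · rw [show ((2 : ZMod 4) + 1) = 3 from by decide, hv2, hv3]
            exact hb2
          · rw [show ((3 : ZMod 4) + 1) = 0 from by decide, hv3, hv0]
            have e : α ^ 3 * FreeGroup.of (Sum.inl (1 : Fin 2)) * (α ^ 0)⁻¹ =
                α ^ 3 * β := by
              show α ^ 3 * β * (α ^ 0)⁻¹ = α ^ 3 * β; group
            rw [e]; exact hb3
      · -- generator γ i
        have hpure : (pure (Sum.inr i) : FreeGroup (Fin 2 ⊕ Fin n)) =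
            FreeGroup.of (Sum.inr i) := rfl
        rw [hχγ i, toAdd_ofAdd, add_zero]
        refine Subgroup.subset_closure ?_
        right
        exact ⟨(i, ⟨k.val, k.val_lt⟩), rfl⟩
    | inv_of x hx =>
      intro k
      have hpure : (pure x : FreeGroup (Fin 2 ⊕ Fin n)) = FreeGroup.of x := rfl
      have h := hx (k - Multiplicative.toAdd (χ (FreeGroup.of x)))
      rw [sub_add_cancel] at h
      have h2 := inv_mem h
      rw [map_inv, toAdd_inv]
      have e : (α ^ (k - Multiplicative.toAdd (χ (FreeGroup.of x))).val *
          FreeGroup.of x * (α ^ k.val)⁻¹)⁻¹ =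
          α ^ k.val * (FreeGroup.of x)⁻¹ *
            (α ^ (k + -Multiplicative.toAdd (χ (FreeGroup.of x))).val)⁻¹ := by
        rw [show k + -Multiplicative.toAdd (χ (FreeGroup.of x)) =
          k - Multiplicative.toAdd (χ (FreeGroup.of x)) from by ring]
        group
      rw [e] at h2
      exact h2
    | mul x y hx hy =>
      intro k
      have h1 := hx k
      have h2 := hy (k + Multiplicative.toAdd (χ x))
      have h3 := mul_mem h1 h2
      rw [map_mul, toAdd_mul, ← add_assoc]
      have e : α ^ k.val * x * (α ^ (k + Multiplicative.toAdd (χ x)).val)⁻¹ *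
          (α ^ (k + Multiplicative.toAdd (χ x)).val * y *
            (α ^ (k + Multiplicative.toAdd (χ x) + Multiplicative.toAdd (χ y)).val)⁻¹) =
          α ^ k.val * (x * y) *
            (α ^ (k + Multiplicative.toAdd (χ x) + Multiplicative.toAdd (χ y)).val)⁻¹ := by
        group
      rw [e] at h3
      exact h3
  apply le_antisymm
  · rw [hH, Subgroup.closure_le]
    rintro x hx
    rcases hx with h5 | ⟨p, rfl⟩
    · simp only [Set.mem_insert_iff, Set.mem_singleton_iff] at h5
      have hχα' : χ α = Multiplicative.ofAdd (1 : ZMod 4) := hχα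
      have hχβ' : χ β = Multiplicative.ofAdd (1 : ZMod 4) := hχβ
      rcases h5 with rfl | rfl | rfl | rfl | rfl <;>
        simp only [SetLike.mem_coe, MonoidHom.mem_ker, map_mul, map_pow, hχα', hχβ'] <;>
        decide
    · have hχα' : χ α = Multiplicative.ofAdd (1 : ZMod 4) := hχα
      have hχγ' : χ (γ p.1) = Multiplicative.ofAdd (0 : ZMod 4) := hχγ p.1
      simp only [SetLike.mem_coe, MonoidHom.mem_ker, map_mul, map_inv, map_pow,
        hχα', hχγ', ofAdd_zero]
      group
  · intro g hg
    have h := key g 0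
    rw [MonoidHom.mem_ker] at hg
    rw [hg] at h
    simpa [hv0, toAdd_one] using h
end

section
/- Let n ≥ 0 and let F be the free group on the n+2 generators α, β, γ₁, …, γₙ. The subgroup of F generated by the set {α², β³, α⁻¹β⁻¹αβ, αβ³α⁻¹, β⁻¹α⁻²β, β⁻¹αβ⁻¹α⁻¹β², β⁻²α²β²} ∪ {γᵢ, αγᵢα⁻¹, αβ⁻¹γᵢβα⁻¹, αβγᵢβ⁻¹α⁻¹, βγᵢβ⁻¹, β⁻¹γᵢβ : 1 ≤ i ≤ n} equals the kernel of the group homomorphism χ : F → ℤ/6ℤ determined by χ(α) = 3, χ(β) = 2 and χ(γᵢ) = 0 for all i. Equivalently, an element with abelianized image m[α] + n'[β] + k₁[γ₁] + … + kₙ[γₙ] lies in this subgroup if and only if 3m + 2n' ≡ 0 (mod 6). -/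
set_option maxHeartbeats 1000000 in
/-- In the free group on `α, β, γ₁, …, γₙ`, the subgroup generated by
`{α², β³, α⁻¹β⁻¹αβ, αβ³α⁻¹, β⁻¹α⁻²β, β⁻¹αβ⁻¹α⁻¹β², β⁻²α²β²}` together with
`{γᵢ, αγᵢα⁻¹, αβ⁻¹γᵢβα⁻¹, αβγᵢβ⁻¹α⁻¹, βγᵢβ⁻¹, β⁻¹γᵢβ}` equals the kernel of
the homomorphism `χ : F → ℤ/6ℤ` with `χ(α) = 3`, `χ(β) = 2`, `χ(γᵢ) = 0`. -/
theorem stmt_7 (n : ℕ) :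
    let α : FreeGroup (Fin 2 ⊕ Fin n) := FreeGroup.of (Sum.inl 0)
    let β : FreeGroup (Fin 2 ⊕ Fin n) := FreeGroup.of (Sum.inl 1)
    let γ : Fin n → FreeGroup (Fin 2 ⊕ Fin n) := fun i => FreeGroup.of (Sum.inr i)
    Subgroup.closure
        (({α ^ 2, β ^ 3, α⁻¹ * β⁻¹ * α * β, α * β ^ 3 * α⁻¹,
            β⁻¹ * (α ^ 2)⁻¹ * β, β⁻¹ * α * β⁻¹ * α⁻¹ * β ^ 2,
            (β ^ 2)⁻¹ * α ^ 2 * β ^ 2} : Set (FreeGroup (Fin 2 ⊕ Fin n))) ∪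
          Set.range γ ∪
          Set.range (fun i => α * γ i * α⁻¹) ∪
          Set.range (fun i => α * β⁻¹ * γ i * β * α⁻¹) ∪
          Set.range (fun i => α * β * γ i * β⁻¹ * α⁻¹) ∪
          Set.range (fun i => β * γ i * β⁻¹) ∪
          Set.range (fun i => β⁻¹ * γ i * β)) =
      (FreeGroup.lift
        (Sum.elim (fun j : Fin 2 => Multiplicative.ofAdd (![(3 : ZMod 6), 2] j))
          (fun _ : Fin n => Multiplicative.ofAdd (0 : ZMod 6)))).ker := by
  intro α β γ
  set χ := (FreeGroup.lift
        (Sum.elim (fun j : Fin 2 => Multiplicative.ofAdd (![(3 : ZMod 6), 2] j))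
          (fun _ : Fin n => Multiplicative.ofAdd (0 : ZMod 6)))) with hχ
  set S : Set (FreeGroup (Fin 2 ⊕ Fin n)) :=
      ({α ^ 2, β ^ 3, α⁻¹ * β⁻¹ * α * β, α * β ^ 3 * α⁻¹,
            β⁻¹ * (α ^ 2)⁻¹ * β, β⁻¹ * α * β⁻¹ * α⁻¹ * β ^ 2,
            (β ^ 2)⁻¹ * α ^ 2 * β ^ 2} : Set (FreeGroup (Fin 2 ⊕ Fin n))) ∪
          Set.range γ ∪
          Set.range (fun i => α * γ i * α⁻¹) ∪
          Set.range (fun i => α * β⁻¹ * γ i * β * α⁻¹) ∪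
          Set.range (fun i => α * β * γ i * β⁻¹ * α⁻¹) ∪
          Set.range (fun i => β * γ i * β⁻¹) ∪
          Set.range (fun i => β⁻¹ * γ i * β) with hS
  have hχα : χ α = Multiplicative.ofAdd (3 : ZMod 6) := by
    simp [hχ, α, FreeGroup.lift_apply_of]
  have hχβ : χ β = Multiplicative.ofAdd (2 : ZMod 6) := by
    simp [hχ, β, FreeGroup.lift_apply_of]
  have hχγ : ∀ i, χ (γ i) = Multiplicative.ofAdd (0 : ZMod 6) := by
    intro i; simp [hχ, γ, FreeGroup.lift_apply_of]
  apply le_antisymm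
  · rw [Subgroup.closure_le]
    intro x hx
    simp only [hS, Set.mem_union, Set.mem_insert_iff, Set.mem_singleton_iff,
      Set.mem_range] at hx
    rw [SetLike.mem_coe, MonoidHom.mem_ker]
    rcases hx with ((((((rfl | rfl | rfl | rfl | rfl | rfl | rfl) | ⟨i, rfl⟩) |
        ⟨i, rfl⟩) | ⟨i, rfl⟩) | ⟨i, rfl⟩) | ⟨i, rfl⟩) | ⟨i, rfl⟩ <;>
      simp only [map_mul, map_pow, map_inv, hχα, hχβ, hχγ] <;> decide
  · -- the hard direction
    -- memberships of the generators
    have h1 : α ^ 2 ∈ Subgroup.closure S :=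
      Subgroup.subset_closure (by rw [hS]; simp)
    have h2 : β ^ 3 ∈ Subgroup.closure S :=
      Subgroup.subset_closure (by rw [hS]; simp)
    have h3 : α⁻¹ * β⁻¹ * α * β ∈ Subgroup.closure S :=
      Subgroup.subset_closure (by rw [hS]; simp)
    have h4 : α * β ^ 3 * α⁻¹ ∈ Subgroup.closure S :=
      Subgroup.subset_closure (by rw [hS]; simp)
    have h5 : β⁻¹ * (α ^ 2)⁻¹ * β ∈ Subgroup.closure S :=
      Subgroup.subset_closure (by rw [hS]; simp)
    have h6 : β⁻¹ * α * β⁻¹ * α⁻¹ * β ^ 2 ∈ Subgroup.closure S :=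
      Subgroup.subset_closure (by rw [hS]; simp)
    have h7 : (β ^ 2)⁻¹ * α ^ 2 * β ^ 2 ∈ Subgroup.closure S :=
      Subgroup.subset_closure (by rw [hS]; simp)
    have hg0 : ∀ i, γ i ∈ Subgroup.closure S := fun i =>
      Subgroup.subset_closure (by rw [hS]; left; left; left; left; left; right; exact ⟨i, rfl⟩)
    have hga : ∀ i, α * γ i * α⁻¹ ∈ Subgroup.closure S := fun i =>
      Subgroup.subset_closure (by rw [hS]; left; left; left; left; right; exact ⟨i, rfl⟩)
    have hgab : ∀ i, α * β⁻¹ * γ i * β * α⁻¹ ∈ Subgroup.closure S := fun i =>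
      Subgroup.subset_closure (by rw [hS]; left; left; left; right; exact ⟨i, rfl⟩)
    have hgab2 : ∀ i, α * β * γ i * β⁻¹ * α⁻¹ ∈ Subgroup.closure S := fun i =>
      Subgroup.subset_closure (by rw [hS]; left; left; right; exact ⟨i, rfl⟩)
    have hgb : ∀ i, β * γ i * β⁻¹ ∈ Subgroup.closure S := fun i =>
      Subgroup.subset_closure (by rw [hS]; left; right; exact ⟨i, rfl⟩)
    have hgb2 : ∀ i, β⁻¹ * γ i * β ∈ Subgroup.closure S := fun i =>
      Subgroup.subset_closure (by rw [hS]; right; exact ⟨i, rfl⟩)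
    -- the transversal
    set Tr : ZMod 6 → FreeGroup (Fin 2 ⊕ Fin n) := fun c =>
      if c = 0 then 1 else if c = 1 then α * β ^ 2 else if c = 2 then β
      else if c = 3 then α else if c = 4 then β ^ 2 else α * β with hTr
    have T0 : Tr 0 = 1 := by simp [hTr]
    have T1 : Tr 1 = α * β ^ 2 := by
      simp [hTr, show (1 : ZMod 6) ≠ 0 by decide]
    have T2 : Tr 2 = β := by
      simp [hTr, show (2 : ZMod 6) ≠ 0 by decide, show (2 : ZMod 6) ≠ 1 by decide]
    have T3 : Tr 3 = α := by
      simp [hTr, show (3 : ZMod 6) ≠ 0 by decide, show (3 : ZMod 6) ≠ 1 by decide,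
        show (3 : ZMod 6) ≠ 2 by decide]
    have T4 : Tr 4 = β ^ 2 := by
      simp [hTr, show (4 : ZMod 6) ≠ 0 by decide, show (4 : ZMod 6) ≠ 1 by decide,
        show (4 : ZMod 6) ≠ 2 by decide, show (4 : ZMod 6) ≠ 3 by decide]
    have T5 : Tr 5 = α * β := by
      simp [hTr, show (5 : ZMod 6) ≠ 0 by decide, show (5 : ZMod 6) ≠ 1 by decide,
        show (5 : ZMod 6) ≠ 2 by decide, show (5 : ZMod 6) ≠ 3 by decide,
        show (5 : ZMod 6) ≠ 4 by decide]
    have hcases : ∀ c : ZMod 6, c = 0 ∨ c = 1 ∨ c = 2 ∨ c = 3 ∨ c = 4 ∨ c = 5 := by decide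
    have key : ∀ g : FreeGroup (Fin 2 ⊕ Fin n), ∀ c : ZMod 6,
        Tr c * g * (Tr (c + (χ g).toAdd))⁻¹ ∈ Subgroup.closure S := by
      intro g
      induction g using FreeGroup.induction_on with
      | C1 =>
        intro c
        have : Tr c * 1 * (Tr (c + (χ 1).toAdd))⁻¹ = 1 := by
          rw [map_one]
          show Tr c * 1 * (Tr (c + 0))⁻¹ = 1
          rw [add_zero]; group
        rw [this]; exact one_mem _
      | of x =>
        intro c
        rcases x with j | i
        · fin_cases j
          · -- x = α
            show Tr c * α * (Tr (c + (χ α).toAdd))⁻¹ ∈ Subgroup.closure S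
            rw [hχα]
            show Tr c * α * (Tr (c + 3))⁻¹ ∈ Subgroup.closure S
            rcases hcases c with rfl | rfl | rfl | rfl | rfl | rfl
            · rw [show (0 : ZMod 6) + 3 = 3 by decide, T0, T3]
              have : (1 : FreeGroup (Fin 2 ⊕ Fin n)) * α * α⁻¹ = 1 := by group
              rw [this]; exact one_mem _
            · rw [show (1 : ZMod 6) + 3 = 4 by decide, T1, T4]
              have : α * β ^ 2 * α * (β ^ 2)⁻¹ =
                  (α * β ^ 3 * α⁻¹) * (α ^ 2) * (α⁻¹ * β⁻¹ * α * β) * (β ^ 3)⁻¹ := by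
                group
              rw [this]
              exact mul_mem (mul_mem (mul_mem h4 h1) h3) (inv_mem h2)
            · rw [show (2 : ZMod 6) + 3 = 5 by decide, T2, T5]
              have : β * α * (α * β)⁻¹ =
                  (β ^ 3) * (β⁻¹ * α * β⁻¹ * α⁻¹ * β ^ 2)⁻¹ * (β⁻¹ * (α ^ 2)⁻¹ * β)⁻¹ *
                    (α⁻¹ * β⁻¹ * α * β)⁻¹ * (α ^ 2)⁻¹ * (α * β ^ 3 * α⁻¹)⁻¹ := by
                group
              rw [this]
              exact mul_mem (mul_mem (mul_mem (mul_mem (mul_mem h2 (inv_mem h6)) (inv_mem h5))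
                (inv_mem h3)) (inv_mem h1)) (inv_mem h4)
            · rw [show (3 : ZMod 6) + 3 = 0 by decide, T3, T0]
              have : α * α * (1 : FreeGroup (Fin 2 ⊕ Fin n))⁻¹ = α ^ 2 := by
                rw [inv_one, mul_one, pow_two]
              rw [this]; exact h1
            · rw [show (4 : ZMod 6) + 3 = 1 by decide, T4, T1]
              have : β ^ 2 * α * (α * β ^ 2)⁻¹ =
                  (β ^ 3) * (β⁻¹ * (α ^ 2)⁻¹ * β)⁻¹ * (α⁻¹ * β⁻¹ * α * β)⁻¹ *
                    (α ^ 2)⁻¹ * (α * β ^ 3 * α⁻¹)⁻¹ := by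
                group
              rw [this]
              exact mul_mem (mul_mem (mul_mem (mul_mem h2 (inv_mem h5)) (inv_mem h3))
                (inv_mem h1)) (inv_mem h4)
            · rw [show (5 : ZMod 6) + 3 = 2 by decide, T5, T2]
              have : α * β * α * β⁻¹ =
                  (α * β ^ 3 * α⁻¹) * (α ^ 2) * (α⁻¹ * β⁻¹ * α * β) * (β⁻¹ * (α ^ 2)⁻¹ * β) *
                    (β⁻¹ * α * β⁻¹ * α⁻¹ * β ^ 2) * ((β ^ 2)⁻¹ * α ^ 2 * β ^ 2) * (β ^ 3)⁻¹ := by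
                group
              rw [this]
              exact mul_mem (mul_mem (mul_mem (mul_mem (mul_mem (mul_mem h4 h1) h3)
                h5) h6) h7) (inv_mem h2)
          · -- x = β
            show Tr c * β * (Tr (c + (χ β).toAdd))⁻¹ ∈ Subgroup.closure S
            rw [hχβ]
            show Tr c * β * (Tr (c + 2))⁻¹ ∈ Subgroup.closure S
            rcases hcases c with rfl | rfl | rfl | rfl | rfl | rfl
            · rw [show (0 : ZMod 6) + 2 = 2 by decide, T0, T2]
              have : (1 : FreeGroup (Fin 2 ⊕ Fin n)) * β * β⁻¹ = 1 := by group
              rw [this]; exact one_mem _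
            · rw [show (1 : ZMod 6) + 2 = 3 by decide, T1, T3]
              have : α * β ^ 2 * β * α⁻¹ = α * β ^ 3 * α⁻¹ := by group
              rw [this]; exact h4
            · rw [show (2 : ZMod 6) + 2 = 4 by decide, T2, T4]
              have : β * β * (β ^ 2)⁻¹ = (1 : FreeGroup (Fin 2 ⊕ Fin n)) := by group
              rw [this]; exact one_mem _
            · rw [show (3 : ZMod 6) + 2 = 5 by decide, T3, T5]
              have : α * β * (α * β)⁻¹ = (1 : FreeGroup (Fin 2 ⊕ Fin n)) := by group
              rw [this]; exact one_mem _
            · rw [show (4 : ZMod 6) + 2 = 0 by decide, T4, T0]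
              have : β ^ 2 * β * (1 : FreeGroup (Fin 2 ⊕ Fin n))⁻¹ = β ^ 3 := by
                rw [inv_one, mul_one, show (3 : ℕ) = 2 + 1 from rfl]
                conv_rhs => rw [pow_succ]
              rw [this]; exact h2
            · rw [show (5 : ZMod 6) + 2 = 1 by decide, T5, T1]
              have : α * β * β * (α * β ^ 2)⁻¹ = (1 : FreeGroup (Fin 2 ⊕ Fin n)) := by group
              rw [this]; exact one_mem _
        · -- x = γ i
          show Tr c * γ i * (Tr (c + (χ (γ i)).toAdd))⁻¹ ∈ Subgroup.closure S
          rw [hχγ]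
          show Tr c * γ i * (Tr (c + 0))⁻¹ ∈ Subgroup.closure S
          rw [add_zero]
          rcases hcases c with rfl | rfl | rfl | rfl | rfl | rfl
          · rw [T0]
            have : (1 : FreeGroup (Fin 2 ⊕ Fin n)) * γ i * 1⁻¹ = γ i := by group
            rw [this]; exact hg0 i
          · rw [T1]
            have : α * β ^ 2 * γ i * (α * β ^ 2)⁻¹ =
                (α * β ^ 3 * α⁻¹) * (α * β⁻¹ * γ i * β * α⁻¹) * (α * β ^ 3 * α⁻¹)⁻¹ := by
              group
            rw [this]; exact mul_mem (mul_mem h4 (hgab i)) (inv_mem h4)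
          · rw [T2]; exact hgb i
          · rw [T3]; exact hga i
          · rw [T4]
            have : β ^ 2 * γ i * (β ^ 2)⁻¹ =
                (β ^ 3) * (β⁻¹ * γ i * β) * (β ^ 3)⁻¹ := by group
            rw [this]; exact mul_mem (mul_mem h2 (hgb2 i)) (inv_mem h2)
          · rw [T5]
            have : α * β * γ i * (α * β)⁻¹ = α * β * γ i * β⁻¹ * α⁻¹ := by group
            rw [this]; exact hgab2 i
      | inv_of x ih =>
        intro c
        have hd : (χ (FreeGroup.of x)⁻¹).toAdd = -(χ (FreeGroup.of x)).toAdd := by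
          rw [map_inv]; rfl
        have harg : c - (χ (FreeGroup.of x)).toAdd + (χ (FreeGroup.of x)).toAdd = c := by ring
        have h := inv_mem (ih (c - (χ (FreeGroup.of x)).toAdd))
        rw [harg] at h
        have heq : Tr c * (FreeGroup.of x)⁻¹ * (Tr (c + (χ (FreeGroup.of x)⁻¹).toAdd))⁻¹ =
            (Tr (c - (χ (FreeGroup.of x)).toAdd) * FreeGroup.of x * (Tr c)⁻¹)⁻¹ := by
          rw [hd, ← sub_eq_add_neg]; group
        rw [heq]; exact h
      | mul x y ihx ihy =>
        intro c
        have h := mul_mem (ihx c) (ihy (c + (χ x).toAdd))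
        have heq : Tr c * (x * y) * (Tr (c + (χ (x * y)).toAdd))⁻¹ =
            (Tr c * x * (Tr (c + (χ x).toAdd))⁻¹) *
              (Tr (c + (χ x).toAdd) * y * (Tr (c + (χ x).toAdd + (χ y).toAdd))⁻¹) := by
          rw [map_mul, toAdd_mul, ← add_assoc]; group
        rw [heq]; exact h
    intro g hg
    rw [MonoidHom.mem_ker] at hg
    have h := key g 0
    rw [hg] at h
    have : Tr (0 + (1 : Multiplicative (ZMod 6)).toAdd) = 1 := by
      rw [show ((1 : Multiplicative (ZMod 6)).toAdd : ZMod 6) = 0 from rfl, add_zero, T0]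
    rw [this, T0] at h
    simpa using h
end

section
/- Let A be a symmetric 2×2 real matrix with det A = d, where |d| > 1, such that 1 is an eigenvalue of A. Let θ ∈ ℝ with cos θ ≠ 1, and let R_θ = [[cos θ, −sin θ], [sin θ, cos θ]] be the rotation matrix by angle θ. Then 1 is not an eigenvalue of R_θ · A; equivalently det(R_θ · A − I) ≠ 0. In fact det(R_θ · A − I) = (1 + d)(1 − cos θ). -/
/-!
For a 2×2 matrix, `det (M - 1) = det M - tr M + 1`. Since `1` is an eigenvalue of `A`, this
gives `tr A = 1 + d`; symmetry of `A` kills the off-diagonal contribution to the trace of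
`R_θ A`, so `tr (R_θ A) = cos θ · tr A`, while `det (R_θ A) = d`. Hence
`det (R_θ A - 1) = d - cos θ (1 + d) + 1 = (1 + d)(1 - cos θ)`, and `|d| > 1` rules out `d = -1`.
-/

open Matrix Polynomial

namespace Matrix

variable {R : Type*} [CommRing R]

lemma isRoot_charpoly_one_iff_det_sub_one_eq_zero {n : Type*} [Fintype n] [DecidableEq n]
    (M : Matrix n n R) : M.charpoly.IsRoot 1 ↔ (M - 1).det = 0 := by
  rw [IsRoot, eval_charpoly, scalar_apply, diagonal_one, ← neg_sub, det_neg]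
  exact (((isUnit_neg_one (α := R)).pow _).mul_right_eq_zero)

lemma det_sub_one_fin_two (M : Matrix (Fin 2) (Fin 2) R) :
    (M - 1).det = M.det - M.trace + 1 := by
  simp only [det_fin_two, trace_fin_two, sub_apply, one_apply_eq, one_apply_ne zero_ne_one,
    one_apply_ne one_ne_zero]
  ring

lemma trace_eq_one_add_det_of_isRoot_charpoly_one {M : Matrix (Fin 2) (Fin 2) R}
    (h : M.charpoly.IsRoot 1) : M.trace = 1 + M.det := by
  rw [isRoot_charpoly_one_iff_det_sub_one_eq_zero, det_sub_one_fin_two] at h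
  linear_combination -h

lemma trace_rotation_mul_of_transpose_eq (c s : R) {A : Matrix (Fin 2) (Fin 2) R}
    (hA : Aᵀ = A) : (!![c, -s; s, c] * A).trace = c * A.trace := by
  have hA10 : A 1 0 = A 0 1 := congrFun (congrFun hA 0) 1
  simp only [trace_fin_two, mul_apply, Fin.sum_univ_two, of_apply, cons_val', cons_val_zero,
    cons_val_one, empty_val', cons_val_fin_one, hA10]
  ring

lemma det_rotation_fin_two (θ : ℝ) :
    (!![Real.cos θ, -Real.sin θ; Real.sin θ, Real.cos θ]).det = 1 := by
  rw [det_fin_two_of]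
  linear_combination Real.cos_sq_add_sin_sq θ

end Matrix

/-- If `A` is a symmetric 2×2 real matrix with `det A = d`, `|d| > 1`, having
`1` as an eigenvalue, and `R_θ` is the rotation by an angle `θ` with
`cos θ ≠ 1`, then `1` is not an eigenvalue of `R_θ · A`; in fact
`det (R_θ · A - I) = (1 + d)(1 - cos θ) ≠ 0`. -/
theorem stmt_12 (A : Matrix (Fin 2) (Fin 2) ℝ) (hsym : Aᵀ = A) (d : ℝ)
    (hdet : A.det = d) (hd : 1 < |d|) (h1 : A.charpoly.IsRoot 1)
    (θ : ℝ) (hθ : Real.cos θ ≠ 1) :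
    let R : Matrix (Fin 2) (Fin 2) ℝ :=
      Matrix.of ![![Real.cos θ, -Real.sin θ], ![Real.sin θ, Real.cos θ]]
    ¬ (R * A).charpoly.IsRoot 1 ∧
      (R * A - 1).det = (1 + d) * (1 - Real.cos θ) ∧ (R * A - 1).det ≠ 0 := by
  intro R
  have htrace : A.trace = 1 + d := hdet ▸ trace_eq_one_add_det_of_isRoot_charpoly_one h1
  have hdet_sub : (R * A - 1).det = (1 + d) * (1 - Real.cos θ) := by
    rw [det_sub_one_fin_two, det_mul, det_rotation_fin_two, trace_rotation_mul_of_transpose_eq _ _ hsym,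
      htrace, hdet]
    ring
  have hd_ne : 1 + d ≠ 0 := by
    intro h
    rw [show d = -1 by linarith, abs_neg, abs_one] at hd
    exact lt_irrefl _ hd
  have hne : (R * A - 1).det ≠ 0 := hdet_sub ▸ mul_ne_zero hd_ne (sub_ne_zero.2 hθ.symm)
  exact ⟨fun h => hne ((isRoot_charpoly_one_iff_det_sub_one_eq_zero _).1 h), hdet_sub, hne⟩
end

section
/- Let M be a finite multiset of elements of ℕ ∪ {∞}, each element being ≥ 2, and suppose that the sum over ν ∈ M of the real numbers (1 − 1/ν) equals 2 (with the convention 1/∞ = 0). Then M is exactly one of the six multisets: {∞, ∞}, {2, 2, ∞}, {2, 4, 4}, {2, 3, 6}, {3, 3, 3}, {2, 2, 2, 2}. -/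
/-!
Each weight `1 - 1/ν` with `ν ≥ 2` lies in `[1/2, 1]`, so `M` has two, three or four elements;
with two elements both weights are `1`, with four all are `1/2`. For three elements
`a ≤ b ≤ c`, the weight being strictly increasing in `ν`, `3 w(a) ≤ 2` forces `a ≤ 3`, then
`2 w(b) ≤ 2 - w(a)` bounds `b`, and finally `w(c) = 2 - w(a) - w(b)` determines `c`.
-/

/-- The weight `1 - 1/ν` of a point of an orbifold, with the convention
`1/∞ = 0`, i.e. `w(∞) = 1`. -/
noncomputable def orbWeight : ℕ∞ → ℝ :=
  fun ν => WithTop.recTopCoe 1 (fun k : ℕ => 1 - 1 / (k : ℝ)) ν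

@[simp] lemma orbWeight_top : orbWeight ⊤ = 1 := rfl

@[simp] lemma orbWeight_natCast (k : ℕ) : orbWeight k = 1 - 1 / (k : ℝ) := rfl

@[simp] lemma orbWeight_ofNat (n : ℕ) [n.AtLeastTwo] :
    orbWeight (no_index (OfNat.ofNat n)) = 1 - 1 / (OfNat.ofNat n : ℝ) :=
  orbWeight_natCast n

lemma orbWeight_le_one (ν : ℕ∞) : orbWeight ν ≤ 1 := by
  induction ν using ENat.recTopCoe <;> simp

-- `orbWeight 0 = 1` because `1 / 0 = 0`, hence the restriction to `ν ≥ 1`.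
lemma strictMonoOn_orbWeight : StrictMonoOn orbWeight (Set.Ici 1) := by
  intro μ (hμ : 1 ≤ μ) ν _ hlt
  lift μ to ℕ using hlt.ne_top
  induction ν using ENat.recTopCoe with
  | top =>
    simp only [orbWeight_natCast, orbWeight_top, sub_lt_self_iff, one_div, inv_pos, Nat.cast_pos]
    exact Nat.one_le_cast.mp hμ
  | coe n =>
    have hμ : (1 : ℝ) ≤ μ := by exact_mod_cast hμ
    have hlt : (μ : ℝ) < n := by exact_mod_cast hlt
    simp only [orbWeight_natCast, sub_lt_sub_iff_left]
    exact one_div_lt_one_div_of_lt (by linarith) hlt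

lemma orbWeight_le_orbWeight_iff {μ ν : ℕ∞} (hμ : 1 ≤ μ) (hν : 1 ≤ ν) :
    orbWeight μ ≤ orbWeight ν ↔ μ ≤ ν :=
  strictMonoOn_orbWeight.le_iff_le hμ hν

lemma orbWeight_inj {μ ν : ℕ∞} (hμ : 1 ≤ μ) (hν : 1 ≤ ν) :
    orbWeight μ = orbWeight ν ↔ μ = ν :=
  strictMonoOn_orbWeight.injOn.eq_iff hμ hν

lemma half_le_orbWeight {ν : ℕ∞} (h : 2 ≤ ν) : 1 / 2 ≤ orbWeight ν := by
  have := (orbWeight_le_orbWeight_iff (by norm_num) (one_le_two.trans h)).mpr h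
  norm_num at this
  linarith

lemma card_mem_Icc_of_sum_orbWeight_eq_two {M : Multiset ℕ∞} (h2 : ∀ ν ∈ M, 2 ≤ ν)
    (hsum : (M.map orbWeight).sum = 2) : M.card ∈ Set.Icc 2 4 := by
  have hle := Multiset.sum_le_card_nsmul (M.map orbWeight) 1 (by simp [orbWeight_le_one])
  have hge := Multiset.card_nsmul_le_sum (s := M.map orbWeight) (a := 1 / 2) <| by
    simpa using fun ν hν ↦ half_le_orbWeight (h2 ν hν)
  simp only [hsum, Multiset.card_map, nsmul_eq_mul, mul_one] at hle hge
  refine ⟨by exact_mod_cast hle, ?_⟩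
  have : (M.card : ℝ) ≤ 4 := by linarith
  exact_mod_cast this

lemma exists_natCast_le_of_orbWeight_le {ν : ℕ∞} {n : ℕ} (hν : 1 ≤ ν) (hn : 1 ≤ n)
    (h : orbWeight ν ≤ 1 - 1 / n) : ∃ k : ℕ, ν = k ∧ k ≤ n :=
  ENat.le_natCast_iff.mp <| (orbWeight_le_orbWeight_iff hν (Nat.one_le_cast.mpr hn)).mp h

lemma eq_natCast_of_orbWeight_eq {ν : ℕ∞} {n : ℕ} (hν : 1 ≤ ν) (hn : 1 ≤ n)
    (h : orbWeight ν = 1 - 1 / n) : ν = n :=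
  (orbWeight_inj hν (Nat.one_le_cast.mpr hn)).mp h

lemma eq_top_of_orbWeight_eq_one {ν : ℕ∞} (hν : 1 ≤ ν) (h : orbWeight ν = 1) : ν = ⊤ :=
  (orbWeight_inj hν le_top).mp h

lemma eq_of_orbWeight_add_add_eq_two {a b c : ℕ∞} (ha : 2 ≤ a) (hab : a ≤ b) (hbc : b ≤ c)
    (h : orbWeight a + orbWeight b + orbWeight c = 2) :
    (a = 2 ∧ b = 2 ∧ c = ⊤) ∨ (a = 2 ∧ b = 4 ∧ c = 4) ∨ (a = 2 ∧ b = 3 ∧ c = 6) ∨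
      (a = 3 ∧ b = 3 ∧ c = 3) := by
  have ha1 : 1 ≤ a := one_le_two.trans ha
  have hb1 : 1 ≤ b := ha1.trans hab
  have hc1 : 1 ≤ c := hb1.trans hbc
  have hwab := (orbWeight_le_orbWeight_iff ha1 hb1).mpr hab
  have hwbc := (orbWeight_le_orbWeight_iff hb1 hc1).mpr hbc
  obtain ⟨a, rfl, ha3⟩ := exists_natCast_le_of_orbWeight_le (n := 3) ha1 (by norm_num)
    (by norm_num; linarith)
  have ha2 : 2 ≤ a := by exact_mod_cast ha
  interval_cases a
  · obtain ⟨b, rfl, hb4⟩ := exists_natCast_le_of_orbWeight_le (n := 4) hb1 (by norm_num)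
      (by norm_num at h ⊢; linarith)
    have hb2 : 2 ≤ b := by exact_mod_cast ha.trans hab
    interval_cases b <;> norm_num at h ⊢
    · exact eq_top_of_orbWeight_eq_one hc1 (by linarith)
    · exact eq_natCast_of_orbWeight_eq (n := 6) hc1 (by norm_num) (by norm_num; linarith)
    · exact eq_natCast_of_orbWeight_eq (n := 4) hc1 (by norm_num) (by norm_num; linarith)
  · obtain ⟨b, rfl, hb3⟩ := exists_natCast_le_of_orbWeight_le (n := 3) hb1 (by norm_num)
      (by norm_num at h ⊢; linarith)
    have hab3 : 3 ≤ b := by exact_mod_cast hab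
    obtain rfl : b = 3 := by omega
    norm_num at h ⊢
    exact eq_natCast_of_orbWeight_eq (n := 3) hc1 (by norm_num) (by norm_num; linarith)

lemma eq_top_of_orbWeight_add_eq_two {a b : ℕ∞} (ha : 1 ≤ a) (hb : 1 ≤ b)
    (h : orbWeight a + orbWeight b = 2) : a = ⊤ ∧ b = ⊤ := by
  have := orbWeight_le_one a
  have := orbWeight_le_one b
  exact ⟨eq_top_of_orbWeight_eq_one ha (by linarith),
    eq_top_of_orbWeight_eq_one hb (by linarith)⟩

lemma eq_two_of_orbWeight_eq_half {ν : ℕ∞} (hν : 1 ≤ ν) (h : orbWeight ν = 1 / 2) : ν = 2 :=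
  eq_natCast_of_orbWeight_eq (n := 2) hν (by norm_num) (by norm_num [h])

lemma eq_two_of_orbWeight_add_add_add_eq_two {a b c d : ℕ∞} (ha : 2 ≤ a) (hb : 2 ≤ b) (hc : 2 ≤ c) (hd : 2 ≤ d)
    (h : orbWeight a + orbWeight b + orbWeight c + orbWeight d = 2) :
    a = 2 ∧ b = 2 ∧ c = 2 ∧ d = 2 := by
  have := half_le_orbWeight ha
  have := half_le_orbWeight hb
  have := half_le_orbWeight hc
  have := half_le_orbWeight hd
  refine ⟨?_, ?_, ?_, ?_⟩ <;> apply eq_two_of_orbWeight_eq_half (one_le_two.trans ‹_›) <;>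
    linarith

/-- A finite multiset of weights `ν ≥ 2` in `ℕ ∪ {∞}` with
`Σ (1 - 1/ν) = 2` is one of the six signatures `(∞,∞)`, `(2,2,∞)`, `(2,4,4)`,
`(2,3,6)`, `(3,3,3)`, `(2,2,2,2)`. -/
theorem stmt_15 (M : Multiset ℕ∞) (h2 : ∀ ν ∈ M, 2 ≤ ν)
    (hsum : (M.map orbWeight).sum = 2) :
    M = {⊤, ⊤} ∨ M = {2, 2, ⊤} ∨ M = {2, 4, 4} ∨ M = {2, 3, 6} ∨
      M = {3, 3, 3} ∨ M = {2, 2, 2, 2} := by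
  obtain ⟨hcard2, hcard4⟩ := card_mem_Icc_of_sum_orbWeight_eq_two h2 hsum
  have hsorted := M.pairwise_sort (· ≤ ·)
  rw [← M.sort_eq (· ≤ ·)] at h2 hsum hcard2 hcard4 ⊢
  generalize M.sort (· ≤ ·) = L at *
  match L, hcard2, hcard4 with
  | [a, b], _, _ =>
    obtain ⟨rfl, rfl⟩ := eq_top_of_orbWeight_add_eq_two (one_le_two.trans (h2 a (by simp)))
      (one_le_two.trans (h2 b (by simp))) (by simpa using hsum)
    exact Or.inl rfl
  | [a, b, c], _, _ =>
    have hs : (a ≤ b ∧ a ≤ c) ∧ b ≤ c := by simpa using hsorted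
    rcases eq_of_orbWeight_add_add_eq_two (h2 a (by simp)) hs.1.1 hs.2 (by simpa [add_assoc] using hsum) with
      ⟨rfl, rfl, rfl⟩ | ⟨rfl, rfl, rfl⟩ | ⟨rfl, rfl, rfl⟩ | ⟨rfl, rfl, rfl⟩
    · exact Or.inr <| Or.inl rfl
    · exact Or.inr <| Or.inr <| Or.inl rfl
    · exact Or.inr <| Or.inr <| Or.inr <| Or.inl rfl
    · exact Or.inr <| Or.inr <| Or.inr <| Or.inr <| Or.inl rfl
  | [a, b, c, d], _, _ =>
    obtain ⟨rfl, rfl, rfl, rfl⟩ := eq_two_of_orbWeight_add_add_add_eq_two (h2 a (by simp)) (h2 b (by simp))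
      (h2 c (by simp)) (h2 d (by simp)) (by simpa [add_assoc] using hsum)
    exact Or.inr <| Or.inr <| Or.inr <| Or.inr <| Or.inr rfl
  | [], h, _ | [_], h, _ => simp at h
  | _ :: _ :: _ :: _ :: _ :: _, _, h => simp at h; omega
end

section
/- Let n ≥ 0, let F be the free group on the n+2 generators α, β, γ₁, …, γₙ, and let F' be the free group on two generators a, b. Let φ : F → F' be a group homomorphism such that the abelianized image of φ(α) and of φ(β) is either [a] or [b], and for each i the abelianized image of φ(γᵢ) is either 2[a] or 2[b]. Then φ maps the subgroup of F generated by {α², β², αβ} ∪ {γᵢ, αγᵢα⁻¹ : 1 ≤ i ≤ n} into the subgroup of F' generated by {a², b², ab}. -/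
/-- The abelianization homomorphism from the free group on `ι` to the free
abelian group `ι →₀ ℤ`, sending each generator to the corresponding standard
basis vector. -/
noncomputable def freeAb {ι : Type*} : FreeGroup ι →* Multiplicative (ι →₀ ℤ) :=
  FreeGroup.lift fun i => Multiplicative.ofAdd (Finsupp.single i 1)

namespace Stmt16Aux

abbrev a : FreeGroup (Fin 2) := FreeGroup.of 0
abbrev b : FreeGroup (Fin 2) := FreeGroup.of 1

def H : Subgroup (FreeGroup (Fin 2)) :=
  Subgroup.closure {a ^ 2, b ^ 2, a * b}

lemma ha2 : a ^ 2 ∈ H := Subgroup.subset_closure (by simp)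
lemma hb2 : b ^ 2 ∈ H := Subgroup.subset_closure (by simp)
lemma hab : a * b ∈ H := Subgroup.subset_closure (by simp)

def Letter (x : FreeGroup (Fin 2)) : Prop :=
  x = a ∨ x = a⁻¹ ∨ x = b ∨ x = b⁻¹

lemma la : Letter a := Or.inl rfl
lemma lb : Letter b := Or.inr (Or.inr (Or.inl rfl))

lemma letter_inv {x} (h : Letter x) : Letter x⁻¹ := by
  rcases h with rfl | rfl | rfl | rfl
  · exact Or.inr (Or.inl rfl)
  · exact Or.inl (by simp)
  · exact Or.inr (Or.inr (Or.inr rfl))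
  · exact Or.inr (Or.inr (Or.inl (by simp)))

lemma pair_mem {x y} (hx : Letter x) (hy : Letter y) : x * y ∈ H := by
  rcases hx with rfl | rfl | rfl | rfl <;> rcases hy with rfl | rfl | rfl | rfl
  · exact (show a * a = a ^ 2 by simp [sq]) ▸ ha2
  · exact (show a * a⁻¹ = 1 by simp) ▸ one_mem H
  · exact hab
  · exact (show a * b⁻¹ = (a * b) * (b ^ 2)⁻¹ by simp [sq, mul_assoc, mul_inv_rev]) ▸
      mul_mem hab (inv_mem hb2)
  · exact (show a⁻¹ * a = 1 by simp) ▸ one_mem H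
  · exact (show a⁻¹ * a⁻¹ = (a ^ 2)⁻¹ by simp [sq, mul_assoc, mul_inv_rev]) ▸ inv_mem ha2
  · exact (show a⁻¹ * b = (a ^ 2)⁻¹ * (a * b) by simp [sq, mul_assoc, mul_inv_rev]) ▸
      mul_mem (inv_mem ha2) hab
  · exact (show a⁻¹ * b⁻¹ = (a ^ 2)⁻¹ * (a * b) * (b ^ 2)⁻¹ by
      simp [sq, mul_assoc, mul_inv_rev]) ▸
      mul_mem (mul_mem (inv_mem ha2) hab) (inv_mem hb2)
  · exact (show b * a = b ^ 2 * (a * b)⁻¹ * a ^ 2 by simp [sq, mul_assoc, mul_inv_rev]) ▸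
      mul_mem (mul_mem hb2 (inv_mem hab)) ha2
  · exact (show b * a⁻¹ = b ^ 2 * (a * b)⁻¹ by simp [sq, mul_assoc, mul_inv_rev]) ▸
      mul_mem hb2 (inv_mem hab)
  · exact (show b * b = b ^ 2 by simp [sq]) ▸ hb2
  · exact (show b * b⁻¹ = 1 by simp) ▸ one_mem H
  · exact (show b⁻¹ * a = (a * b)⁻¹ * a ^ 2 by simp [sq, mul_assoc, mul_inv_rev]) ▸
      mul_mem (inv_mem hab) ha2
  · exact (show b⁻¹ * a⁻¹ = (a * b)⁻¹ by simp [mul_inv_rev]) ▸ inv_mem hab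
  · exact (show b⁻¹ * b = 1 by simp) ▸ one_mem H
  · exact (show b⁻¹ * b⁻¹ = (b ^ 2)⁻¹ by simp [sq, mul_assoc, mul_inv_rev]) ▸ inv_mem hb2

lemma letter_conj {x} (hx : Letter x) {g} (hg : g ∈ H) : x * g * x⁻¹ ∈ H := by
  induction hg using Subgroup.closure_induction with
  | mem g hgS =>
    have hxi := letter_inv hx
    rcases hgS with rfl | rfl | rfl
    · exact (show x * a ^ 2 * x⁻¹ = (x * a) * (a * x⁻¹) by simp [sq, mul_assoc]) ▸
        mul_mem (pair_mem hx la) (pair_mem la hxi)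
    · exact (show x * b ^ 2 * x⁻¹ = (x * b) * (b * x⁻¹) by simp [sq, mul_assoc]) ▸
        mul_mem (pair_mem hx lb) (pair_mem lb hxi)
    · exact (show x * (a * b) * x⁻¹ = (x * a) * (b * x⁻¹) by simp [mul_assoc]) ▸
        mul_mem (pair_mem hx la) (pair_mem lb hxi)
  | one => simpa using one_mem H
  | mul g h _ _ ihg ihh =>
    exact (show x * (g * h) * x⁻¹ = (x * g * x⁻¹) * (x * h * x⁻¹) by simp [mul_assoc]) ▸
      mul_mem ihg ihh
  | inv g _ ihg =>
    exact (show x * g⁻¹ * x⁻¹ = (x * g * x⁻¹)⁻¹ by simp [mul_assoc, mul_inv_rev]) ▸ inv_mem ihg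

lemma conj_mem (x : FreeGroup (Fin 2)) : ∀ g ∈ H, x * g * x⁻¹ ∈ H := by
  induction x using FreeGroup.induction_on with
  | C1 => intro g hg; simpa using hg
  | of i =>
    intro g hg
    have hi : Letter (FreeGroup.of i) := by
      fin_cases i
      · exact la
      · exact lb
    exact letter_conj hi hg
  | inv_of i _ =>
    intro g hg
    have hi : Letter (FreeGroup.of i)⁻¹ := by
      fin_cases i
      · exact letter_inv la
      · exact letter_inv lb
    exact letter_conj hi hg
  | mul x y ihx ihy =>
    intro g hg
    exact (show x * y * g * (x * y)⁻¹ = x * (y * g * y⁻¹) * x⁻¹ by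
      simp [mul_assoc, mul_inv_rev]) ▸ ihx _ (ihy g hg)

lemma even_claim (x : FreeGroup (Fin 2)) : x ∈ H ∨ a * x ∈ H := by
  induction x using FreeGroup.induction_on with
  | C1 => exact Or.inl (one_mem H)
  | of i =>
    right
    fin_cases i
    · exact (show a * a = a ^ 2 by simp [sq]) ▸ ha2
    · exact hab
  | inv_of i _ =>
    right
    fin_cases i
    · exact (show a * a⁻¹ = 1 by simp) ▸ one_mem H
    · exact pair_mem la (letter_inv lb)
  | mul x y ihx ihy =>
    rcases ihx with hx | hx <;> rcases ihy with hy | hy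
    · exact Or.inl (mul_mem hx hy)
    · exact Or.inr ((show a * (x * y) = (a * x * a⁻¹) * (a * y) by
        simp [mul_assoc]) ▸ mul_mem (conj_mem a x hx) hy)
    · exact Or.inr ((show a * (x * y) = (a * x) * y by simp [mul_assoc]) ▸ mul_mem hx hy)
    · refine Or.inl ?_
      have h1 : a⁻¹ * ((a * x) * (a⁻¹ * (a * y) * a⁻¹⁻¹)) * a⁻¹⁻¹ ∈ H :=
        conj_mem a⁻¹ _ (mul_mem hx (conj_mem a⁻¹ _ hy))
      have h2 := mul_mem h1 (inv_mem ha2)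
      exact (show x * y = a⁻¹ * ((a * x) * (a⁻¹ * (a * y) * a⁻¹⁻¹)) * a⁻¹⁻¹ * (a ^ 2)⁻¹ by
        simp [sq, mul_assoc, mul_inv_rev]) ▸ h2


noncomputable def eps : FreeGroup (Fin 2) →* Multiplicative (ZMod 2) :=
  FreeGroup.lift fun _ => Multiplicative.ofAdd 1

def sigma : Multiplicative (Fin 2 →₀ ℤ) →* Multiplicative (ZMod 2) where
  toFun f := Multiplicative.ofAdd
    (((Multiplicative.toAdd f) 0 + (Multiplicative.toAdd f) 1 : ℤ) : ZMod 2)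
  map_one' := by simp
  map_mul' f g := by
    simp only [toAdd_mul, Finsupp.add_apply, ← ofAdd_add]
    push_cast
    ring_nf

lemma sig_single (j : Fin 2) (m : ℤ) :
    sigma (Multiplicative.ofAdd (Finsupp.single j m)) = Multiplicative.ofAdd (m : ZMod 2) := by
  fin_cases j <;> simp [sigma, Finsupp.single_apply]

lemma eps_eq (x : FreeGroup (Fin 2)) : eps x = sigma (freeAb x) := by
  have : eps = sigma.comp freeAb := by
    apply FreeGroup.ext_hom
    intro i
    fin_cases i <;>
      simp [eps, freeAb, FreeGroup.lift_apply_of, sig_single]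
  rw [this]; rfl

lemma H_le_ker : H ≤ eps.ker := by
  have : Subgroup.closure {a ^ 2, b ^ 2, a * b} ≤ eps.ker := by
    rw [Subgroup.closure_le]
    rintro g (rfl | rfl | rfl) <;>
      simp only [SetLike.mem_coe, MonoidHom.mem_ker, map_pow, map_mul, eps,
        FreeGroup.lift_apply_of] <;> decide
  exact this

lemma mem_of_eps {x : FreeGroup (Fin 2)} (h : eps x = 1) : x ∈ H := by
  rcases even_claim x with hx | hx
  · exact hx
  · exfalso
    have h2 := H_le_ker hx
    rw [MonoidHom.mem_ker, map_mul, h, mul_one] at h2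
    have : eps a = Multiplicative.ofAdd (1 : ZMod 2) := FreeGroup.lift_apply_of
    rw [this] at h2
    exact absurd h2 (by decide)

end Stmt16Aux

open Stmt16Aux

/-- If `φ` is a homomorphism from the free group on `α, β, γ₁, …, γₙ` to the
free group on `a, b` whose abelianized values on `α, β` are `[a]` or `[b]`
and on each `γᵢ` are `2[a]` or `2[b]`, then `φ` maps the subgroup generated
by `{α², β², αβ} ∪ {γᵢ, αγᵢα⁻¹}` into the subgroup generated by
`{a², b², ab}`. -/
theorem stmt_16 (n : ℕ) (φ : FreeGroup (Fin 2 ⊕ Fin n) →* FreeGroup (Fin 2))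
    (hα : freeAb (φ (FreeGroup.of (Sum.inl 0))) =
            Multiplicative.ofAdd (Finsupp.single (0 : Fin 2) (1 : ℤ)) ∨
          freeAb (φ (FreeGroup.of (Sum.inl 0))) =
            Multiplicative.ofAdd (Finsupp.single (1 : Fin 2) (1 : ℤ)))
    (hβ : freeAb (φ (FreeGroup.of (Sum.inl 1))) =
            Multiplicative.ofAdd (Finsupp.single (0 : Fin 2) (1 : ℤ)) ∨
          freeAb (φ (FreeGroup.of (Sum.inl 1))) =
            Multiplicative.ofAdd (Finsupp.single (1 : Fin 2) (1 : ℤ)))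
    (hγ : ∀ i : Fin n,
          freeAb (φ (FreeGroup.of (Sum.inr i))) =
            Multiplicative.ofAdd (Finsupp.single (0 : Fin 2) (2 : ℤ)) ∨
          freeAb (φ (FreeGroup.of (Sum.inr i))) =
            Multiplicative.ofAdd (Finsupp.single (1 : Fin 2) (2 : ℤ))) :
    (Subgroup.closure
        (({FreeGroup.of (Sum.inl 0) ^ 2, FreeGroup.of (Sum.inl 1) ^ 2,
            FreeGroup.of (Sum.inl 0) * FreeGroup.of (Sum.inl 1)} :
              Set (FreeGroup (Fin 2 ⊕ Fin n))) ∪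
          Set.range (fun i : Fin n => FreeGroup.of (Sum.inr i)) ∪
          Set.range (fun i : Fin n =>
            FreeGroup.of (Sum.inl 0) * FreeGroup.of (Sum.inr i) *
              (FreeGroup.of (Sum.inl 0))⁻¹))).map φ ≤
      Subgroup.closure
        ({FreeGroup.of 0 ^ 2, FreeGroup.of 1 ^ 2,
          FreeGroup.of 0 * FreeGroup.of 1} : Set (FreeGroup (Fin 2))) := by
  have hεα : eps (φ (FreeGroup.of (Sum.inl 0))) = Multiplicative.ofAdd (1 : ZMod 2) := by
    rcases hα with h | h <;> rw [eps_eq, h, sig_single] <;> norm_num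
  have hεβ : eps (φ (FreeGroup.of (Sum.inl 1))) = Multiplicative.ofAdd (1 : ZMod 2) := by
    rcases hβ with h | h <;> rw [eps_eq, h, sig_single] <;> norm_num
  have hεγ : ∀ i : Fin n, eps (φ (FreeGroup.of (Sum.inr i))) = 1 := by
    intro i
    rcases hγ i with h | h <;> rw [eps_eq, h, sig_single] <;> decide
  have hHeq : Subgroup.closure
      ({FreeGroup.of 0 ^ 2, FreeGroup.of 1 ^ 2,
        FreeGroup.of 0 * FreeGroup.of 1} : Set (FreeGroup (Fin 2))) = H := rfl
  rw [hHeq]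
  refine Subgroup.map_le_iff_le_comap.mpr ((Subgroup.closure_le _).2 ?_)
  intro g hg
  simp only [Set.mem_union, Set.mem_insert_iff, Set.mem_singleton_iff, Set.mem_range] at hg
  rw [SetLike.mem_coe, Subgroup.mem_comap]
  apply mem_of_eps
  rcases hg with ((rfl | rfl | rfl) | ⟨i, rfl⟩) | ⟨i, rfl⟩
  · rw [map_pow, map_pow, hεα]; decide
  · rw [map_pow, map_pow, hεβ]; decide
  · rw [map_mul, map_mul, hεα, hεβ]; decide
  · exact hεγ i
  · simp only [map_mul, map_inv, hεα, hεγ i, mul_one, mul_inv_cancel]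
end

section
/- Let n ≥ 0, let F be the free group on the n+3 generators α, β, ε, γ₁, …, γₙ, and let F' be the free group on three generators a, b, e. Let φ : F → F' be a group homomorphism such that the abelianized image of each of φ(α), φ(β), φ(ε) belongs to {[a], [b], [e], −[a]−[b]−[e]}, and for each i the abelianized image of φ(γᵢ) equals 2v for some v ∈ {[a], [b], [e], −[a]−[b]−[e]}. Then φ maps the subgroup of F generated by {α², β², αβ, βε} ∪ {γᵢ, αγᵢα⁻¹ : 1 ≤ i ≤ n} into the subgroup of F' generated by {a², b², e², ab, be}. -/
/-- Total exponent sum mod 2. -/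
noncomputable def tau2 : (Fin 3 →₀ ℤ) →+ ZMod 2 :=
  Finsupp.liftAddHom fun _ => Int.castAddHom (ZMod 2)

/-- Parity homomorphism on the free group on three generators. -/
noncomputable def psi2 : FreeGroup (Fin 3) →* Multiplicative (ZMod 2) :=
  FreeGroup.lift fun _ => Multiplicative.ofAdd (1 : ZMod 2)

lemma psi2_eq : psi2 = (AddMonoidHom.toMultiplicative tau2).comp freeAb := by
  apply FreeGroup.ext_hom
  intro a
  simp [psi2, freeAb, tau2, Finsupp.liftAddHom_apply_single]

namespace Stmt17Aux

noncomputable abbrev A : FreeGroup (Fin 3) := FreeGroup.of 0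
noncomputable abbrev B : FreeGroup (Fin 3) := FreeGroup.of 1
noncomputable abbrev E : FreeGroup (Fin 3) := FreeGroup.of 2

noncomputable abbrev H : Subgroup (FreeGroup (Fin 3)) :=
  Subgroup.closure
    ({FreeGroup.of 0 ^ 2, FreeGroup.of 1 ^ 2, FreeGroup.of 2 ^ 2,
      FreeGroup.of 0 * FreeGroup.of 1,
      FreeGroup.of 1 * FreeGroup.of 2} : Set (FreeGroup (Fin 3)))

lemma hA2 : A ^ 2 ∈ H := Subgroup.subset_closure (by simp)
lemma hB2 : B ^ 2 ∈ H := Subgroup.subset_closure (by simp)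
lemma hE2 : E ^ 2 ∈ H := Subgroup.subset_closure (by simp)
lemma hAB : A * B ∈ H := Subgroup.subset_closure (by simp)
lemma hBE : B * E ∈ H := Subgroup.subset_closure (by simp)

lemma hAE : A * E ∈ H := by
  have h : A * E = (A * B) * (B ^ 2)⁻¹ * (B * E) := by group
  rw [h]; exact mul_mem (mul_mem hAB (inv_mem hB2)) hBE

lemma hBA : B * A ∈ H := by
  have h : B * A = B ^ 2 * (A * B)⁻¹ * A ^ 2 := by group
  rw [h]; exact mul_mem (mul_mem hB2 (inv_mem hAB)) hA2

lemma hEA : E * A ∈ H := by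
  have h : E * A = E ^ 2 * (A * E)⁻¹ * A ^ 2 := by group
  rw [h]; exact mul_mem (mul_mem hE2 (inv_mem hAE)) hA2

lemma hiAB : A⁻¹ * B ∈ H := by
  have h : A⁻¹ * B = (A ^ 2)⁻¹ * (A * B) := by group
  rw [h]; exact mul_mem (inv_mem hA2) hAB

lemma hiAE : A⁻¹ * E ∈ H := by
  have h : A⁻¹ * E = (A ^ 2)⁻¹ * (A * E) := by group
  rw [h]; exact mul_mem (inv_mem hA2) hAE

lemma conjA : ∀ x ∈ H, A * x * A⁻¹ ∈ H ∧ A⁻¹ * x * A ∈ H := by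
  intro x hx
  induction hx using Subgroup.closure_induction with
  | mem x hx =>
    simp only [Set.mem_insert_iff, Set.mem_singleton_iff] at hx
    rcases hx with rfl | rfl | rfl | rfl | rfl
    · constructor
      · have h : A * A ^ 2 * A⁻¹ = A ^ 2 := by group
        rw [h]; exact hA2
      · have h : A⁻¹ * A ^ 2 * A = A ^ 2 := by group
        rw [h]; exact hA2
    · constructor
      · have h : A * B ^ 2 * A⁻¹ = (A * B) * B ^ 2 * (A * B)⁻¹ := by group
        rw [h]; exact mul_mem (mul_mem hAB hB2) (inv_mem hAB)
      · have h : A⁻¹ * B ^ 2 * A = (A ^ 2)⁻¹ * ((A * B) * B ^ 2 * (A * B)⁻¹) * A ^ 2 := by group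
        rw [h]
        exact mul_mem (mul_mem (inv_mem hA2) (mul_mem (mul_mem hAB hB2) (inv_mem hAB))) hA2
    · constructor
      · have h : A * E ^ 2 * A⁻¹ = (A * E) * E ^ 2 * (A * E)⁻¹ := by group
        rw [h]; exact mul_mem (mul_mem hAE hE2) (inv_mem hAE)
      · have h : A⁻¹ * E ^ 2 * A = (A ^ 2)⁻¹ * ((A * E) * E ^ 2 * (A * E)⁻¹) * A ^ 2 := by group
        rw [h]
        exact mul_mem (mul_mem (inv_mem hA2) (mul_mem (mul_mem hAE hE2) (inv_mem hAE))) hA2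
    · constructor
      · have h : A * (A * B) * A⁻¹ = A ^ 2 * (B ^ 2 * (A * B)⁻¹) := by group; rw [zpow_two]
        rw [h]; exact mul_mem hA2 (mul_mem hB2 (inv_mem hAB))
      · have h : A⁻¹ * (A * B) * A = B * A := by group
        rw [h]; exact hBA
    · constructor
      · have h : A * (B * E) * A⁻¹ = (A * B) * (E ^ 2 * (A * E)⁻¹) := by group
        rw [h]; exact mul_mem hAB (mul_mem hE2 (inv_mem hAE))
      · have h : A⁻¹ * (B * E) * A = (A⁻¹ * B) * (E * A) := by group
        rw [h]; exact mul_mem hiAB hEA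
  | one => simpa using one_mem H
  | mul x y hx hy ihx ihy =>
    constructor
    · have h : A * (x * y) * A⁻¹ = (A * x * A⁻¹) * (A * y * A⁻¹) := by group
      rw [h]; exact mul_mem ihx.1 ihy.1
    · have h : A⁻¹ * (x * y) * A = (A⁻¹ * x * A) * (A⁻¹ * y * A) := by group
      rw [h]; exact mul_mem ihx.2 ihy.2
  | inv x hx ihx =>
    constructor
    · have h : A * x⁻¹ * A⁻¹ = (A * x * A⁻¹)⁻¹ := by group
      rw [h]; exact inv_mem ihx.1
    · have h : A⁻¹ * x⁻¹ * A = (A⁻¹ * x * A)⁻¹ := by group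
      rw [h]; exact inv_mem ihx.2

lemma cover : ∀ x : FreeGroup (Fin 3), x ∈ H ∨ A⁻¹ * x ∈ H := by
  intro x
  induction x using FreeGroup.induction_on with
  | C1 => exact Or.inl (one_mem H)
  | of i =>
    right
    fin_cases i
    · have h : A⁻¹ * A = 1 := by group
      show A⁻¹ * A ∈ H
      rw [h]; exact one_mem H
    · exact hiAB
    · exact hiAE
  | inv_of i _ =>
    right
    fin_cases i
    · have h : A⁻¹ * A⁻¹ = (A ^ 2)⁻¹ := by group
      show A⁻¹ * A⁻¹ ∈ H
      rw [h]; exact inv_mem hA2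
    · show A⁻¹ * B⁻¹ ∈ H
      have h : A⁻¹ * B⁻¹ = (B * A)⁻¹ := by group
      rw [h]; exact inv_mem hBA
    · show A⁻¹ * E⁻¹ ∈ H
      have h : A⁻¹ * E⁻¹ = (E * A)⁻¹ := by group
      rw [h]; exact inv_mem hEA
  | mul x y hx hy =>
    rcases hx with hx | hx <;> rcases hy with hy | hy
    · exact Or.inl (mul_mem hx hy)
    · right
      have h : A⁻¹ * (x * y) = (A⁻¹ * x * A) * (A⁻¹ * y) := by group
      rw [h]; exact mul_mem (conjA x hx).2 hy
    · right
      have h : A⁻¹ * (x * y) = (A⁻¹ * x) * y := by group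
      rw [h]; exact mul_mem hx hy
    · left
      have h : x * y = A ^ 2 * (A⁻¹ * (A⁻¹ * x) * A) * (A⁻¹ * y) := by group
      rw [h]; exact mul_mem (mul_mem hA2 (conjA _ hx).2) hy

lemma H_le_ker : H ≤ psi2.ker := by
  rw [Subgroup.closure_le]
  intro x hx
  simp only [Set.mem_insert_iff, Set.mem_singleton_iff] at hx
  rcases hx with rfl | rfl | rfl | rfl | rfl <;>
    simp only [SetLike.mem_coe, MonoidHom.mem_ker, map_pow, map_mul, psi2,
      FreeGroup.lift_apply_of] <;> decide

lemma mem_of_ker (x : FreeGroup (Fin 3)) (hx : psi2 x = 1) : x ∈ H := by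
  rcases cover x with h | h
  · exact h
  · exfalso
    have h1 : psi2 (A⁻¹ * x) = 1 := H_le_ker h
    rw [map_mul, map_inv, hx, mul_one] at h1
    have h2 : psi2 A = Multiplicative.ofAdd (1 : ZMod 2) := FreeGroup.lift_apply_of
    rw [h2] at h1
    exact absurd h1 (by decide)

end Stmt17Aux

/-- If `φ` is a homomorphism from the free group on `α, β, ε, γ₁, …, γₙ` to
the free group on `a, b, e` whose abelianized values on `α, β, ε` lie in
`{[a], [b], [e], -[a]-[b]-[e]}` and on each `γᵢ` equal `2v` for some `v` in
that set, then `φ` maps the subgroup generated by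
`{α², β², αβ, βε} ∪ {γᵢ, αγᵢα⁻¹}` into the subgroup generated by
`{a², b², e², ab, be}`. -/
theorem stmt_17 (n : ℕ) (φ : FreeGroup (Fin 3 ⊕ Fin n) →* FreeGroup (Fin 3))
    (hα : ∀ x : Fin 3, ∃ v ∈
        ({Finsupp.single 0 1, Finsupp.single 1 1, Finsupp.single 2 1,
          -(Finsupp.single 0 1 + Finsupp.single 1 1 + Finsupp.single 2 1)} :
            Set (Fin 3 →₀ ℤ)),
        freeAb (φ (FreeGroup.of (Sum.inl x))) = Multiplicative.ofAdd v)
    (hγ : ∀ i : Fin n, ∃ v ∈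
        ({Finsupp.single 0 1, Finsupp.single 1 1, Finsupp.single 2 1,
          -(Finsupp.single 0 1 + Finsupp.single 1 1 + Finsupp.single 2 1)} :
            Set (Fin 3 →₀ ℤ)),
        freeAb (φ (FreeGroup.of (Sum.inr i))) = Multiplicative.ofAdd (2 • v)) :
    (Subgroup.closure
        (({FreeGroup.of (Sum.inl 0) ^ 2, FreeGroup.of (Sum.inl 1) ^ 2,
            FreeGroup.of (Sum.inl 0) * FreeGroup.of (Sum.inl 1),
            FreeGroup.of (Sum.inl 1) * FreeGroup.of (Sum.inl 2)} :
              Set (FreeGroup (Fin 3 ⊕ Fin n))) ∪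
          Set.range (fun i : Fin n => FreeGroup.of (Sum.inr i)) ∪
          Set.range (fun i : Fin n =>
            FreeGroup.of (Sum.inl 0) * FreeGroup.of (Sum.inr i) *
              (FreeGroup.of (Sum.inl 0))⁻¹))).map φ ≤
      Subgroup.closure
        ({FreeGroup.of 0 ^ 2, FreeGroup.of 1 ^ 2, FreeGroup.of 2 ^ 2,
          FreeGroup.of 0 * FreeGroup.of 1,
          FreeGroup.of 1 * FreeGroup.of 2} : Set (FreeGroup (Fin 3))) := by
  -- the values of tau2 on the allowed abelianized images are all odd
  have tau_odd : ∀ v ∈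
      ({Finsupp.single 0 1, Finsupp.single 1 1, Finsupp.single 2 1,
        -(Finsupp.single 0 1 + Finsupp.single 1 1 + Finsupp.single 2 1)} :
          Set (Fin 3 →₀ ℤ)), tau2 v = 1 := by
    intro v hv
    simp only [Set.mem_insert_iff, Set.mem_singleton_iff] at hv
    rcases hv with rfl | rfl | rfl | rfl
    · simp [tau2, Finsupp.liftAddHom_apply_single]
    · simp [tau2, Finsupp.liftAddHom_apply_single]
    · simp [tau2, Finsupp.liftAddHom_apply_single]
    · rw [map_neg, map_add, map_add]
      simp only [tau2, Finsupp.liftAddHom_apply_single, Int.coe_castAddHom, Int.cast_one]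
      decide
  have key : ∀ x : Fin 3,
      psi2 (φ (FreeGroup.of (Sum.inl x))) = Multiplicative.ofAdd (1 : ZMod 2) := by
    intro x
    obtain ⟨v, hv, heq⟩ := hα x
    rw [psi2_eq, MonoidHom.comp_apply, heq]
    show Multiplicative.ofAdd (tau2 v) = _
    rw [tau_odd v hv]
  have keyγ : ∀ i : Fin n, psi2 (φ (FreeGroup.of (Sum.inr i))) = 1 := by
    intro i
    obtain ⟨v, hv, heq⟩ := hγ i
    rw [psi2_eq, MonoidHom.comp_apply, heq]
    show Multiplicative.ofAdd (tau2 (2 • v)) = 1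
    rw [map_nsmul, tau_odd v hv]
    decide
  rw [Subgroup.map_le_iff_le_comap, Subgroup.closure_le]
  intro g hg
  simp only [Set.mem_union, Set.mem_insert_iff, Set.mem_singleton_iff, Set.mem_range] at hg
  simp only [SetLike.mem_coe, Subgroup.mem_comap]
  apply Stmt17Aux.mem_of_ker
  rcases hg with ((rfl | rfl | rfl | rfl) | ⟨i, rfl⟩) | ⟨i, rfl⟩
  · rw [map_pow, map_pow, key]
    decide
  · rw [map_pow, map_pow, key]
    decide
  · rw [map_mul, map_mul, key, key]
    decide
  · rw [map_mul, map_mul, key, key]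
    decide
  · exact keyγ i
  · simp only [map_mul, map_inv, key, keyγ, mul_one, mul_inv_cancel]
end

section
/- Let n ≥ 0, let F be the free group on the n+2 generators α, β, γ₁, …, γₙ, and let F' be the free group on two generators a, b. Let φ : F → F' be a group homomorphism such that the abelianized image of φ(α) and of φ(β) is either [a] or [b], and for each i the abelianized image of φ(γᵢ) belongs to {4[a], 4[b], −2[a]−2[b]}. Then φ maps the subgroup of F generated by {α⁴, β⁴, (αβ)², α²βα, α²β²} ∪ {αᵏγᵢα⁻ᵏ : 1 ≤ i ≤ n, k = 0, 1, 2, 3} into the subgroup of F' generated by {a⁴, b⁴, (ab)², a²ba, a²b²}. -/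
namespace Stmt18Aux

/-- Sum of the two coordinates, reduced mod 4. -/
noncomputable def τ : (Fin 2 →₀ ℤ) →+ ZMod 4 :=
  (Int.castAddHom (ZMod 4)).comp (Finsupp.applyAddHom (0 : Fin 2) + Finsupp.applyAddHom 1)

noncomputable def χ : Multiplicative (Fin 2 →₀ ℤ) →* Multiplicative (ZMod 4) :=
  AddMonoidHom.toMultiplicative τ

lemma χ_ofAdd (m : Fin 2 →₀ ℤ) :
    χ (Multiplicative.ofAdd m) = Multiplicative.ofAdd (((m 0 + m 1 : ℤ) : ZMod 4)) := rfl

/-- Total exponent sum mod 4. -/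
noncomputable def ψ : FreeGroup (Fin 2) →* Multiplicative (ZMod 4) := χ.comp freeAb

lemma ψ_apply (w : FreeGroup (Fin 2)) : ψ w = χ (freeAb w) := rfl

lemma ψ_of (x : Fin 2) : ψ (FreeGroup.of x) = Multiplicative.ofAdd (1 : ZMod 4) := by
  fin_cases x <;>
    · rw [ψ_apply]
      simp only [freeAb, FreeGroup.lift_apply_of, χ_ofAdd]
      simp [Finsupp.single_apply]

notation "la" => FreeGroup.of (0 : Fin 2)
notation "lb" => FreeGroup.of (1 : Fin 2)

noncomputable def σ (w : FreeGroup (Fin 2)) : ℕ := (Multiplicative.toAdd (ψ w)).val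

lemma σ_mul (x y : FreeGroup (Fin 2)) : σ (x * y) = (σ x + σ y) % 4 := by
  simp [σ, map_mul, ZMod.val_add]

lemma σ_of (x : Fin 2) : σ (FreeGroup.of x) = 1 := by
  simp only [σ, ψ_of]; decide

lemma σ_of_inv (x : Fin 2) : σ (FreeGroup.of x)⁻¹ = 3 := by
  simp only [σ, map_inv, ψ_of]; decide

lemma σ_one : σ (1 : FreeGroup (Fin 2)) = 0 := by
  simp only [σ, map_one]; decide

def S : Set (FreeGroup (Fin 2)) :=
  {la ^ 4, lb ^ 4, (la * lb) ^ 2, la ^ 2 * lb * la, la ^ 2 * lb ^ 2}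

noncomputable def G : Subgroup (FreeGroup (Fin 2)) := Subgroup.closure S

lemma hg1 : la ^ 4 ∈ G := Subgroup.subset_closure (by left; rfl)
lemma hg2 : lb ^ 4 ∈ G := Subgroup.subset_closure (by right; left; rfl)
lemma hg3 : la * lb * (la * lb) ∈ G := by
  rw [← pow_two]; exact Subgroup.subset_closure (by right; right; left; rfl)
lemma hg4 : la ^ 2 * lb * la ∈ G := Subgroup.subset_closure (by right; right; right; left; rfl)
lemma hg5 : la ^ 2 * lb ^ 2 ∈ G := Subgroup.subset_closure (by right; right; right; right; rfl)

lemma he1 : la⁻¹ * lb ∈ G := by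
  have : la⁻¹ * lb = (la ^ 2 * lb * la)⁻¹ * (la ^ 2 * lb ^ 2) := by group
  rw [this]; exact mul_mem (inv_mem hg4) hg5

lemma he2 : lb * la ^ 3 ∈ G := by
  have : lb * la ^ 3 = (lb ^ 4) * (la ^ 2 * lb ^ 2)⁻¹ * (la ^ 4) * (la ^ 2 * lb * la)⁻¹ *
      (la ^ 2 * lb ^ 2) * (la * lb * (la * lb))⁻¹ * (la ^ 4) := by group
  rw [this]
  exact mul_mem (mul_mem (mul_mem (mul_mem (mul_mem (mul_mem hg2 (inv_mem hg5)) hg1)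
    (inv_mem hg4)) hg5) (inv_mem hg3)) hg1

/-- conjugation by `a⁻¹` preserves `G`. -/
lemma conjA : ∀ g ∈ G, la⁻¹ * g * la ∈ G := by
  intro g hg
  induction hg using Subgroup.closure_induction with
  | mem s hs =>
    rcases hs with h | h | h | h | h <;> subst h
    · have : la⁻¹ * la ^ 4 * la = la ^ 4 := by group
      rw [this]; exact hg1
    · have : la⁻¹ * lb ^ 4 * la =
          (la ^ 2 * lb * la)⁻¹ * (la ^ 2 * lb ^ 2) * (lb ^ 4) * (la ^ 2 * lb ^ 2)⁻¹ *
            (la ^ 2 * lb * la) := by group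
      rw [this]
      exact mul_mem (mul_mem (mul_mem (mul_mem (inv_mem hg4) hg5) hg2) (inv_mem hg5)) hg4
    · have : la⁻¹ * (la * lb) ^ 2 * la =
          (lb ^ 4) * (la ^ 2 * lb ^ 2)⁻¹ * (la ^ 4) * (la ^ 2 * lb * la)⁻¹ *
            (la ^ 2 * lb ^ 2) * (la * lb * (la * lb))⁻¹ * (la ^ 2 * lb * la) := by
        rw [pow_two]; group
      rw [this]
      exact mul_mem (mul_mem (mul_mem (mul_mem (mul_mem (mul_mem hg2 (inv_mem hg5)) hg1)
        (inv_mem hg4)) hg5) (inv_mem hg3)) hg4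
    · have : la⁻¹ * (la ^ 2 * lb * la) * la =
          la * lb * (la * lb) * (la ^ 2 * lb ^ 2)⁻¹ * (la ^ 2 * lb * la) := by
        group
        all_goals simp [zpow_two, pow_two, mul_assoc]
      rw [this]; exact mul_mem (mul_mem hg3 (inv_mem hg5)) hg4
    · have : la⁻¹ * (la ^ 2 * lb ^ 2) * la =
          la * lb * (la * lb) * (la ^ 2 * lb ^ 2)⁻¹ * (la ^ 2 * lb * la) * (la ^ 4)⁻¹ *
            (la ^ 2 * lb * la) := by
        group
        all_goals simp [zpow_two, pow_two, mul_assoc]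
      rw [this]
      exact mul_mem (mul_mem (mul_mem (mul_mem hg3 (inv_mem hg5)) hg4) (inv_mem hg1)) hg4
  | one => simpa using one_mem G
  | mul x y hx hy ihx ihy =>
    have : la⁻¹ * (x * y) * la = (la⁻¹ * x * la) * (la⁻¹ * y * la) := by group
    rw [this]; exact mul_mem ihx ihy
  | inv x hx ihx =>
    have : la⁻¹ * x⁻¹ * la = (la⁻¹ * x * la)⁻¹ := by group
    rw [this]; exact inv_mem ihx

lemma conjApow (k : ℕ) : ∀ g ∈ G, (la ^ k)⁻¹ * g * la ^ k ∈ G := by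
  induction k with
  | zero => intro g hg; simpa using hg
  | succ k ih =>
    intro g hg
    have : (la ^ (k + 1))⁻¹ * g * la ^ (k + 1) =
        la⁻¹ * ((la ^ k)⁻¹ * g * la ^ k) * la := by
      rw [pow_succ]; group
    rw [this]
    exact conjA _ (ih g hg)

lemma memP_of (x : Fin 2) : (la ^ σ (FreeGroup.of x))⁻¹ * FreeGroup.of x ∈ G := by
  rw [σ_of, pow_one]
  fin_cases x
  · show la⁻¹ * la ∈ G
    simpa using one_mem G
  · show la⁻¹ * lb ∈ G
    exact he1

lemma memP_of_inv (x : Fin 2) : (la ^ σ (FreeGroup.of x)⁻¹)⁻¹ * (FreeGroup.of x)⁻¹ ∈ G := by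
  rw [σ_of_inv]
  fin_cases x
  · show (la ^ 3)⁻¹ * la⁻¹ ∈ G
    have : (la ^ 3)⁻¹ * la⁻¹ = (la ^ 4)⁻¹ := by group
    rw [this]; exact inv_mem hg1
  · show (la ^ 3)⁻¹ * lb⁻¹ ∈ G
    have : (la ^ 3)⁻¹ * lb⁻¹ = (lb * la ^ 3)⁻¹ := by group
    rw [this]; exact inv_mem he2

lemma main_mem (w : FreeGroup (Fin 2)) : (la ^ σ w)⁻¹ * w ∈ G := by
  induction w using FreeGroup.induction_on with
  | C1 => rw [σ_one]; simpa using one_mem G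
  | of x => exact memP_of x
  | inv_of x _ => exact memP_of_inv x
  | mul x y ihx ihy =>
    have hk : σ x + σ y = σ (x * y) + 4 * ((σ x + σ y) / 4) := by
      rw [σ_mul]; omega
    have hpow : la ^ σ x * la ^ σ y = la ^ σ (x * y) * (la ^ 4) ^ ((σ x + σ y) / 4) := by
      rw [← pow_add, ← pow_mul, ← pow_add]
      exact congrArg (fun t => la ^ t) hk
    have key : (la ^ σ (x * y))⁻¹ * (x * y) =
        ((la ^ σ (x * y))⁻¹ * (la ^ σ x * la ^ σ y)) *
          ((la ^ σ y)⁻¹ * ((la ^ σ x)⁻¹ * x) * la ^ σ y) * ((la ^ σ y)⁻¹ * y) := by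
      group
    rw [key, hpow]
    have : (la ^ σ (x * y))⁻¹ * (la ^ σ (x * y) * (la ^ 4) ^ ((σ x + σ y) / 4)) =
        (la ^ 4) ^ ((σ x + σ y) / 4) := by group
    rw [this]
    exact mul_mem (mul_mem (pow_mem hg1 _) (conjApow _ _ ihx)) ihy

lemma mem_of_ψ (w : FreeGroup (Fin 2)) (h : ψ w = 1) : w ∈ G := by
  have hσ : σ w = 0 := by simp only [σ, h]; decide
  have := main_mem w
  rw [hσ] at this
  simpa using this

end Stmt18Aux

open Stmt18Aux in
/-- If `φ` is a homomorphism from the free group on `α, β, γ₁, …, γₙ` to the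
free group on `a, b` whose abelianized values on `α, β` are `[a]` or `[b]`
and on each `γᵢ` lie in `{4[a], 4[b], -2[a]-2[b]}`, then `φ` maps the
subgroup generated by `{α⁴, β⁴, (αβ)², α²βα, α²β²} ∪ {αᵏγᵢα⁻ᵏ : k = 0,1,2,3}`
into the subgroup generated by `{a⁴, b⁴, (ab)², a²ba, a²b²}`. -/
theorem stmt_18 (n : ℕ) (φ : FreeGroup (Fin 2 ⊕ Fin n) →* FreeGroup (Fin 2))
    (hα : ∀ x : Fin 2,
          freeAb (φ (FreeGroup.of (Sum.inl x))) =
            Multiplicative.ofAdd (Finsupp.single (0 : Fin 2) (1 : ℤ)) ∨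
          freeAb (φ (FreeGroup.of (Sum.inl x))) =
            Multiplicative.ofAdd (Finsupp.single (1 : Fin 2) (1 : ℤ)))
    (hγ : ∀ i : Fin n,
          freeAb (φ (FreeGroup.of (Sum.inr i))) =
            Multiplicative.ofAdd (Finsupp.single (0 : Fin 2) (4 : ℤ)) ∨
          freeAb (φ (FreeGroup.of (Sum.inr i))) =
            Multiplicative.ofAdd (Finsupp.single (1 : Fin 2) (4 : ℤ)) ∨
          freeAb (φ (FreeGroup.of (Sum.inr i))) =
            Multiplicative.ofAdd
              (-(Finsupp.single (0 : Fin 2) (2 : ℤ)) -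
                Finsupp.single (1 : Fin 2) (2 : ℤ))) :
    (Subgroup.closure
        (({FreeGroup.of (Sum.inl 0) ^ 4, FreeGroup.of (Sum.inl 1) ^ 4,
            (FreeGroup.of (Sum.inl 0) * FreeGroup.of (Sum.inl 1)) ^ 2,
            FreeGroup.of (Sum.inl 0) ^ 2 * FreeGroup.of (Sum.inl 1) *
              FreeGroup.of (Sum.inl 0),
            FreeGroup.of (Sum.inl 0) ^ 2 * FreeGroup.of (Sum.inl 1) ^ 2} :
              Set (FreeGroup (Fin 2 ⊕ Fin n))) ∪
          Set.range (fun p : Fin n × Fin 4 =>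
            FreeGroup.of (Sum.inl 0) ^ (p.2 : ℕ) * FreeGroup.of (Sum.inr p.1) *
              (FreeGroup.of (Sum.inl 0) ^ (p.2 : ℕ))⁻¹))).map φ ≤
      Subgroup.closure
        ({FreeGroup.of 0 ^ 4, FreeGroup.of 1 ^ 4,
          (FreeGroup.of 0 * FreeGroup.of 1) ^ 2,
          FreeGroup.of 0 ^ 2 * FreeGroup.of 1 * FreeGroup.of 0,
          FreeGroup.of 0 ^ 2 * FreeGroup.of 1 ^ 2} :
            Set (FreeGroup (Fin 2))) := by
  have hψφα : ∀ x : Fin 2, ψ (φ (FreeGroup.of (Sum.inl x))) =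
      Multiplicative.ofAdd (1 : ZMod 4) := by
    intro x
    rcases hα x with h | h <;>
      · rw [ψ_apply, h, χ_ofAdd]
        simp [Finsupp.single_apply]
  have hψφγ : ∀ i : Fin n, ψ (φ (FreeGroup.of (Sum.inr i))) = 1 := by
    intro i
    rcases hγ i with h | h | h <;>
      · rw [ψ_apply, h, χ_ofAdd]
        simp [Finsupp.single_apply]
        decide
  rw [Subgroup.map_le_iff_le_comap]
  apply Subgroup.closure_le _ |>.mpr
  intro t ht
  simp only [Subgroup.coe_comap, Set.mem_preimage, SetLike.mem_coe]
  apply mem_of_ψ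
  rcases ht with (h | h | h | h | h) | ⟨⟨i, k⟩, rfl⟩
  · subst h; simp only [map_pow, hψφα]; decide
  · subst h; simp only [map_pow, hψφα]; decide
  · subst h; simp only [map_pow, map_mul, hψφα]; decide
  · subst h; simp only [map_pow, map_mul, hψφα]; decide
  · subst h; simp only [map_pow, map_mul, hψφα]; decide
  · simp only [map_mul, map_inv, map_pow, hψφγ, hψφα]
    group
end
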